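/- arXiv:1810.10082 — 6 statements merged into one kernel-verified Lean document; each statement's English description precedes it below -/
import Mathlib

section
/- For all x ≥ 0, we have 1 - e^{-x} ≤ 1.2985 · x/(1+x). -/
open Real

set_option maxHeartbeats 1000000

private lemma exp_q_lb (y c : ℝ) (hy0 : 0 ≤ y) (hy1 : y ≤ 1)
    (hc : c ≤ (∑ m ∈ Finset.range 12, (-y) ^ m / m.factorial) -
      y ^ 12 * 13 / ((Nat.factorial 12 : ℝ) * 12)) : c ≤ Real.exp (-y) := by
  have h := Real.exp_bound (x := -y) (by rwa [abs_neg, abs_of_nonneg hy0]) (n := 12) (by norm_num)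
  rw [abs_neg, abs_of_nonneg hy0] at h
  have h2 := (abs_le.1 h).1
  norm_num [Nat.factorial] at h2 hc
  linarith

private lemma exp_neg_lb (a c r : ℝ) (hc0 : 0 ≤ c) (hr : r ≤ c ^ 4)
    (hc : c ≤ Real.exp (-(a / 4))) : r ≤ Real.exp (-a) := by
  calc r ≤ c ^ 4 := hr
    _ ≤ Real.exp (-(a / 4)) ^ 4 := pow_le_pow_left₀ hc0 hc 4
    _ = Real.exp (-a) := by
        rw [← Real.exp_nat_mul]
        congr 1
        push_cast
        ring

private lemma tangent {a x r : ℝ} (hr : r ≤ Real.exp (-a)) (hr0 : 0 ≤ r)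
    (h : 0 ≤ 1 + a - x) : r * (1 + a - x) ≤ Real.exp (-x) := by
  have h1 : 1 + (a - x) ≤ Real.exp (a - x) := by
    have := Real.add_one_le_exp (a - x); linarith
  calc r * (1 + a - x) ≤ Real.exp (-a) * Real.exp (a - x) := by
        apply mul_le_mul hr (by linarith) h (Real.exp_pos _).le
    _ = Real.exp (-x) := by rw [← Real.exp_add]; ring_nf

private lemma eb1 : (5554369/10000000 : ℝ) ≤ Real.exp (-(147/250 : ℝ)) := by
  apply exp_neg_lb _ (863293977/1000000000 : ℝ) _ (by norm_num) (by norm_num)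
  apply exp_q_lb _ _ (by norm_num) (by norm_num)
  norm_num [Finset.sum_range_succ, Nat.factorial]

private lemma eb2 : (3362163/10000000 : ℝ) ≤ Real.exp (-(109/100 : ℝ)) := by
  apply exp_neg_lb _ (761473429/1000000000 : ℝ) _ (by norm_num) (by norm_num)
  apply exp_q_lb _ _ (by norm_num) (by norm_num)
  norm_num [Finset.sum_range_succ, Nat.factorial]

private lemma eb3 : (485851/2000000 : ℝ) ≤ Real.exp (-(283/200 : ℝ)) := by
  apply exp_neg_lb _ (351025229/500000000 : ℝ) _ (by norm_num) (by norm_num)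
  apply exp_q_lb _ _ (by norm_num) (by norm_num)
  norm_num [Finset.sum_range_succ, Nat.factorial]

private lemma eb4 : (201493/1000000 : ℝ) ≤ Real.exp (-(801/500 : ℝ)) := by
  apply exp_neg_lb _ (669984969/1000000000 : ℝ) _ (by norm_num) (by norm_num)
  apply exp_q_lb _ _ (by norm_num) (by norm_num)
  norm_num [Finset.sum_range_succ, Nat.factorial]

private lemma eb5 : (1821361/10000000 : ℝ) ≤ Real.exp (-(1703/1000 : ℝ)) := by
  apply exp_neg_lb _ (653279641/1000000000 : ℝ) _ (by norm_num) (by norm_num)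
  apply exp_q_lb _ _ (by norm_num) (by norm_num)
  norm_num [Finset.sum_range_succ, Nat.factorial]

private lemma eb6 : (171701/1000000 : ℝ) ≤ Real.exp (-(881/500 : ℝ)) := by
  apply exp_neg_lb _ (643714483/1000000000 : ℝ) _ (by norm_num) (by norm_num)
  apply exp_q_lb _ _ (by norm_num) (by norm_num)
  norm_num [Finset.sum_range_succ, Nat.factorial]

private lemma eb7 : (1638177/10000000 : ℝ) ≤ Real.exp (-(1809/1000 : ℝ)) := by
  apply exp_neg_lb _ (636195101/1000000000 : ℝ) _ (by norm_num) (by norm_num)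
  apply exp_q_lb _ _ (by norm_num) (by norm_num)
  norm_num [Finset.sum_range_succ, Nat.factorial]

private lemma eb8 : (1548961/10000000 : ℝ) ≤ Real.exp (-(373/200 : ℝ)) := by
  apply exp_neg_lb _ (313675213/500000000 : ℝ) _ (by norm_num) (by norm_num)
  apply exp_q_lb _ _ (by norm_num) (by norm_num)
  norm_num [Finset.sum_range_succ, Nat.factorial]

private lemma eb9 : (56287/400000 : ℝ) ≤ Real.exp (-(1961/1000 : ℝ)) := by
  apply exp_neg_lb _ (76559157/125000000 : ℝ) _ (by norm_num) (by norm_num)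
  apply exp_q_lb _ _ (by norm_num) (by norm_num)
  norm_num [Finset.sum_range_succ, Nat.factorial]

private lemma eb10 : (1144061/10000000 : ℝ) ≤ Real.exp (-(271/125 : ℝ)) := by
  apply exp_neg_lb _ (7269799/12500000 : ℝ) _ (by norm_num) (by norm_num)
  apply exp_q_lb _ _ (by norm_num) (by norm_num)
  norm_num [Finset.sum_range_succ, Nat.factorial]

private lemma eb11 : (679487/10000000 : ℝ) ≤ Real.exp (-(2689/1000 : ℝ)) := by
  apply exp_neg_lb _ (510558527/1000000000 : ℝ) _ (by norm_num) (by norm_num)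
  apply exp_q_lb _ _ (by norm_num) (by norm_num)
  norm_num [Finset.sum_range_succ, Nat.factorial]

private lemma eb12 : (100589/2500000 : ℝ) ≤ Real.exp (-(3213/1000 : ℝ)) := by
  apply exp_neg_lb _ (89574203/200000000 : ℝ) _ (by norm_num) (by norm_num)
  apply exp_q_lb _ _ (by norm_num) (by norm_num)
  norm_num [Finset.sum_range_succ, Nat.factorial]

theorem one_sub_exp_neg_le (x : ℝ) (hx : 0 ≤ x) :
    1 - Real.exp (-x) ≤ 1.2985 * (x / (1 + x)) := by
  have h1x : (0 : ℝ) < 1 + x := by linarith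
  rw [show (1.2985 : ℝ) * (x / (1 + x)) = 1.2985 * x / (1 + x) by ring,
    le_div_iff₀ h1x]
  rcases le_or_gt x (29/100) with hv | hu0
  · have key : (1 : ℝ) * (1 + 0 - x) ≤ Real.exp (-x) :=
      tangent (by norm_num [Real.exp_zero]) (by norm_num) (by linarith)
    nlinarith [key, mul_nonneg hx (sub_nonneg.2 hv)]
  rcases le_or_gt x (177/200) with hv | hu1
  · have key : (5554369/10000000 : ℝ) * (1 + 147/250 - x) ≤ Real.exp (-x) :=
      tangent eb1 (by norm_num) (by linarith)
    nlinarith [key, mul_nonneg (sub_nonneg.2 hu0.le) (sub_nonneg.2 hv)]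
  rcases le_or_gt x (647/500) with hv | hu2
  · have key : (3362163/10000000 : ℝ) * (1 + 109/100 - x) ≤ Real.exp (-x) :=
      tangent eb2 (by norm_num) (by linarith)
    nlinarith [key, mul_nonneg (sub_nonneg.2 hu1.le) (sub_nonneg.2 hv)]
  rcases le_or_gt x (192/125) with hv | hu3
  · have key : (485851/2000000 : ℝ) * (1 + 283/200 - x) ≤ Real.exp (-x) :=
      tangent eb3 (by norm_num) (by linarith)
    nlinarith [key, mul_nonneg (sub_nonneg.2 hu2.le) (sub_nonneg.2 hv)]
  rcases le_or_gt x (1667/1000) with hv | hu4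
  · have key : (201493/1000000 : ℝ) * (1 + 801/500 - x) ≤ Real.exp (-x) :=
      tangent eb4 (by norm_num) (by linarith)
    nlinarith [key, mul_nonneg (sub_nonneg.2 hu3.le) (sub_nonneg.2 hv)]
  rcases le_or_gt x (1739/1000) with hv | hu5
  · have key : (1821361/10000000 : ℝ) * (1 + 1703/1000 - x) ≤ Real.exp (-x) :=
      tangent eb5 (by norm_num) (by linarith)
    nlinarith [key, mul_nonneg (sub_nonneg.2 hu4.le) (sub_nonneg.2 hv)]
  rcases le_or_gt x (357/200) with hv | hu6
  · have key : (171701/1000000 : ℝ) * (1 + 881/500 - x) ≤ Real.exp (-x) :=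
      tangent eb6 (by norm_num) (by linarith)
    nlinarith [key, mul_nonneg (sub_nonneg.2 hu5.le) (sub_nonneg.2 hv)]
  rcases le_or_gt x (1833/1000) with hv | hu7
  · have key : (1638177/10000000 : ℝ) * (1 + 1809/1000 - x) ≤ Real.exp (-x) :=
      tangent eb7 (by norm_num) (by linarith)
    nlinarith [key, mul_nonneg (sub_nonneg.2 hu6.le) (sub_nonneg.2 hv)]
  rcases le_or_gt x (1897/1000) with hv | hu8
  · have key : (1548961/10000000 : ℝ) * (1 + 373/200 - x) ≤ Real.exp (-x) :=
      tangent eb8 (by norm_num) (by linarith)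
    nlinarith [key, mul_nonneg (sub_nonneg.2 hu7.le) (sub_nonneg.2 hv)]
  rcases le_or_gt x (81/40) with hv | hu9
  · have key : (56287/400000 : ℝ) * (1 + 1961/1000 - x) ≤ Real.exp (-x) :=
      tangent eb9 (by norm_num) (by linarith)
    nlinarith [key, mul_nonneg (sub_nonneg.2 hu8.le) (sub_nonneg.2 hv)]
  rcases le_or_gt x (289/125) with hv | hu10
  · have key : (1144061/10000000 : ℝ) * (1 + 271/125 - x) ≤ Real.exp (-x) :=
      tangent eb10 (by norm_num) (by linarith)
    nlinarith [key, mul_nonneg (sub_nonneg.2 hu9.le) (sub_nonneg.2 hv)]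
  rcases le_or_gt x (1533/500) with hv | hu11
  · have key : (679487/10000000 : ℝ) * (1 + 2689/1000 - x) ≤ Real.exp (-x) :=
      tangent eb11 (by norm_num) (by linarith)
    nlinarith [key, mul_nonneg (sub_nonneg.2 hu10.le) (sub_nonneg.2 hv)]
  rcases le_or_gt x (84/25) with hv | hu12
  · have key : (100589/2500000 : ℝ) * (1 + 3213/1000 - x) ≤ Real.exp (-x) :=
      tangent eb12 (by norm_num) (by linarith)
    nlinarith [key, mul_nonneg (sub_nonneg.2 hu11.le) (sub_nonneg.2 hv)]
  nlinarith [Real.exp_pos (-x), mul_pos (Real.exp_pos (-x)) h1x]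
end

section
/- For all x ≥ 0, we have 1 - (1+x)e^{-x} ≤ 0.4634 · √x. -/
set_option maxHeartbeats 1600000 in
private lemma exp_neg_ge (a B : ℝ) (ha0 : 0 ≤ a) (ha : a ≤ 8) (hB0 : 0 ≤ B)
    (hB : B ≤ (∑ m ∈ Finset.range 8, (-(a/8))^m / m.factorial) - (a/8)^8 * (9 / (40320 * 8))) :
    B ^ 8 ≤ Real.exp (-a) := by
  have hle : 0 ≤ a / 8 := by linarith
  have hx : |(-(a/8))| ≤ 1 := by rw [abs_neg, abs_of_nonneg hle]; linarith
  have h := Real.exp_bound hx (n := 8) (by norm_num)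
  have h1 := (abs_le.mp h).1
  rw [abs_neg, abs_of_nonneg hle] at h1
  have h2 : B ≤ Real.exp (-(a/8)) := by
    norm_num [Nat.factorial] at h1 hB ⊢
    linarith
  calc B^8 ≤ (Real.exp (-(a/8)))^8 := pow_le_pow_left₀ hB0 h2 8
  _ = Real.exp (8 * (-(a/8))) := (Real.exp_nat_mul _ 8).symm
  _ = Real.exp (-a) := by ring_nf

set_option maxHeartbeats 1600000 in
private lemma tangent_lb (a L x : ℝ) (hL : 0 < L) (hLa : L ≤ Real.exp (-a)) :
    L * (1 + a - x) ≤ Real.exp (-x) := by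
  rcases le_or_gt x (1 + a) with h | h
  · have h1 : (a - x) + 1 ≤ Real.exp (a - x) := Real.add_one_le_exp _
    have h2 : L * (1 + a - x) ≤ Real.exp (-a) * Real.exp (a - x) :=
      mul_le_mul hLa (by linarith) (by linarith) (Real.exp_pos _).le
    rwa [← Real.exp_add, show -a + (a - x) = -x by ring] at h2
  · nlinarith [Real.exp_pos (-x)]

set_option maxHeartbeats 1600000 in
theorem one_sub_one_add_mul_exp_neg_le (x : ℝ) (hx : 0 ≤ x) :
    1 - (1 + x) * Real.exp (-x) ≤ 0.4634 * Real.sqrt x := by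
  set s := Real.sqrt x with hsdef
  have hs0 : 0 ≤ s := Real.sqrt_nonneg x
  have hsx : s ^ 2 = x := Real.sq_sqrt hx
  have hexp1 : (499719/2500000 : ℝ) ≤ Real.exp (-(161/100 : ℝ)) := by
    have h := exp_neg_ge (161/100 : ℝ) (2044269947/2500000000 : ℝ) (by norm_num) (by norm_num) (by norm_num)
      (by norm_num [Finset.sum_range_succ, Nat.factorial])
    calc (499719/2500000 : ℝ) ≤ (2044269947/2500000000 : ℝ) ^ 8 := by norm_num
    _ ≤ Real.exp (-(161/100 : ℝ)) := h
  have hexp2 : (665367/10000000 : ℝ) ≤ Real.exp (-(271/100 : ℝ)) := by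
    have h := exp_neg_ge (271/100 : ℝ) (7126605829/10000000000 : ℝ) (by norm_num) (by norm_num) (by norm_num)
      (by norm_num [Finset.sum_range_succ, Nat.factorial])
    calc (665367/10000000 : ℝ) ≤ (7126605829/10000000000 : ℝ) ^ 8 := by norm_num
    _ ≤ Real.exp (-(271/100 : ℝ)) := h
  have hexp3 : (455019/10000000 : ℝ) ≤ Real.exp (-(309/100 : ℝ)) := by
    have h := exp_neg_ge (309/100 : ℝ) (3398002893/5000000000 : ℝ) (by norm_num) (by norm_num) (by norm_num)
      (by norm_num [Finset.sum_range_succ, Nat.factorial])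
    calc (455019/10000000 : ℝ) ≤ (3398002893/5000000000 : ℝ) ^ 8 := by norm_num
    _ ≤ Real.exp (-(309/100 : ℝ)) := h
  have hexp4 : (407621/10000000 : ℝ) ≤ Real.exp (-(16/5 : ℝ)) := by
    have h := exp_neg_ge (16/5 : ℝ) (6703200121/10000000000 : ℝ) (by norm_num) (by norm_num) (by norm_num)
      (by norm_num [Finset.sum_range_succ, Nat.factorial])
    calc (407621/10000000 : ℝ) ≤ (6703200121/10000000000 : ℝ) ^ 8 := by norm_num
    _ ≤ Real.exp (-(16/5 : ℝ)) := h
  have hexp5 : (186269/5000000 : ℝ) ≤ Real.exp (-(329/100 : ℝ)) := by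
    have h := exp_neg_ge (329/100 : ℝ) (6628211633/10000000000 : ℝ) (by norm_num) (by norm_num) (by norm_num)
      (by norm_num [Finset.sum_range_succ, Nat.factorial])
    calc (186269/5000000 : ℝ) ≤ (6628211633/10000000000 : ℝ) ^ 8 := by norm_num
    _ ≤ Real.exp (-(329/100 : ℝ)) := h
  have hexp6 : (135259/5000000 : ℝ) ≤ Real.exp (-(361/100 : ℝ)) := by
    have h := exp_neg_ge (361/100 : ℝ) (3184157629/5000000000 : ℝ) (by norm_num) (by norm_num) (by norm_num)
      (by norm_num [Finset.sum_range_succ, Nat.factorial])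
    calc (135259/5000000 : ℝ) ≤ (3184157629/5000000000 : ℝ) ^ 8 := by norm_num
    _ ≤ Real.exp (-(361/100 : ℝ)) := h
  have hexp7 : (113333/10000000 : ℝ) ≤ Real.exp (-(112/25 : ℝ)) := by
    have h := exp_neg_ge (112/25 : ℝ) (2856042841/5000000000 : ℝ) (by norm_num) (by norm_num) (by norm_num)
      (by norm_num [Finset.sum_range_succ, Nat.factorial])
    calc (113333/10000000 : ℝ) ≤ (2856042841/5000000000 : ℝ) ^ 8 := by norm_num
    _ ≤ Real.exp (-(112/25 : ℝ)) := h
  rcases le_or_gt s (773/1000 : ℝ) with hv0 | hv0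
  · have ht := tangent_lb (0 : ℝ) (1 : ℝ) x (by norm_num) (by norm_num)
    have h2 : 1 - (1 + x) * Real.exp (-x) ≤ 1 - (1+x) * ((1 : ℝ)*(1+(0 : ℝ)-x)) := by
      nlinarith [ht]
    have hu : (0 : ℝ) ≤ s := hs0
    have h3 : 1 - (1+s^2) * ((1 : ℝ)*(1+(0 : ℝ)-s^2)) ≤ 0.4634 * s := by
      nlinarith [sq_nonneg (s - (773/2000 : ℝ)), sq_nonneg (s*s - (597529/4000000 : ℝ)), sq_nonneg (s - (0 : ℝ)), sq_nonneg ((773/1000 : ℝ) - s), mul_nonneg (sub_nonneg.mpr hu) (sub_nonneg.mpr hv0), sq_nonneg s]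
    rw [hsx] at h3
    linarith
  rcases le_or_gt s (359/250 : ℝ) with hv1 | hv1
  · have ht := tangent_lb (161/100 : ℝ) (499719/2500000 : ℝ) x (by norm_num) hexp1
    have h2 : 1 - (1 + x) * Real.exp (-x) ≤ 1 - (1+x) * ((499719/2500000 : ℝ)*(1+(161/100 : ℝ)-x)) := by
      nlinarith [ht]
    have hu : (773/1000 : ℝ) ≤ s := le_of_lt hv0
    have h3 : 1 - (1+s^2) * ((499719/2500000 : ℝ)*(1+(161/100 : ℝ)-s^2)) ≤ 0.4634 * s := by
      nlinarith [sq_nonneg (s - (2209/2000 : ℝ)), sq_nonneg (s*s - (4879681/4000000 : ℝ)), sq_nonneg (s - (773/1000 : ℝ)), sq_nonneg ((359/250 : ℝ) - s), mul_nonneg (sub_nonneg.mpr hu) (sub_nonneg.mpr hv1), sq_nonneg s]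
    rw [hsx] at h3
    linarith
  rcases le_or_gt s (17/10 : ℝ) with hv2 | hv2
  · have ht := tangent_lb (271/100 : ℝ) (665367/10000000 : ℝ) x (by norm_num) hexp2
    have h2 : 1 - (1 + x) * Real.exp (-x) ≤ 1 - (1+x) * ((665367/10000000 : ℝ)*(1+(271/100 : ℝ)-x)) := by
      nlinarith [ht]
    have hu : (359/250 : ℝ) ≤ s := le_of_lt hv1
    have h3 : 1 - (1+s^2) * ((665367/10000000 : ℝ)*(1+(271/100 : ℝ)-s^2)) ≤ 0.4634 * s := by
      nlinarith [sq_nonneg (s - (196/125 : ℝ)), sq_nonneg (s*s - (38416/15625 : ℝ)), sq_nonneg (s - (359/250 : ℝ)), sq_nonneg ((17/10 : ℝ) - s), mul_nonneg (sub_nonneg.mpr hu) (sub_nonneg.mpr hv2), sq_nonneg s]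
    rw [hsx] at h3
    linarith
  rcases le_or_gt s (887/500 : ℝ) with hv3 | hv3
  · have ht := tangent_lb (309/100 : ℝ) (455019/10000000 : ℝ) x (by norm_num) hexp3
    have h2 : 1 - (1 + x) * Real.exp (-x) ≤ 1 - (1+x) * ((455019/10000000 : ℝ)*(1+(309/100 : ℝ)-x)) := by
      nlinarith [ht]
    have hu : (17/10 : ℝ) ≤ s := le_of_lt hv2
    have h3 : 1 - (1+s^2) * ((455019/10000000 : ℝ)*(1+(309/100 : ℝ)-s^2)) ≤ 0.4634 * s := by
      nlinarith [sq_nonneg (s - (1737/1000 : ℝ)), sq_nonneg (s*s - (3017169/1000000 : ℝ)), sq_nonneg (s - (17/10 : ℝ)), sq_nonneg ((887/500 : ℝ) - s), mul_nonneg (sub_nonneg.mpr hu) (sub_nonneg.mpr hv3), sq_nonneg s]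
    rw [hsx] at h3
    linarith
  rcases le_or_gt s (1801/1000 : ℝ) with hv4 | hv4
  · have ht := tangent_lb (16/5 : ℝ) (407621/10000000 : ℝ) x (by norm_num) hexp4
    have h2 : 1 - (1 + x) * Real.exp (-x) ≤ 1 - (1+x) * ((407621/10000000 : ℝ)*(1+(16/5 : ℝ)-x)) := by
      nlinarith [ht]
    have hu : (887/500 : ℝ) ≤ s := le_of_lt hv3
    have h3 : 1 - (1+s^2) * ((407621/10000000 : ℝ)*(1+(16/5 : ℝ)-s^2)) ≤ 0.4634 * s := by
      nlinarith [sq_nonneg (s - (143/80 : ℝ)), sq_nonneg (s*s - (20449/6400 : ℝ)), sq_nonneg (s - (887/500 : ℝ)), sq_nonneg ((1801/1000 : ℝ) - s), mul_nonneg (sub_nonneg.mpr hu) (sub_nonneg.mpr hv4), sq_nonneg s]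
    rw [hsx] at h3
    linarith
  rcases le_or_gt s (232/125 : ℝ) with hv5 | hv5
  · have ht := tangent_lb (329/100 : ℝ) (186269/5000000 : ℝ) x (by norm_num) hexp5
    have h2 : 1 - (1 + x) * Real.exp (-x) ≤ 1 - (1+x) * ((186269/5000000 : ℝ)*(1+(329/100 : ℝ)-x)) := by
      nlinarith [ht]
    have hu : (1801/1000 : ℝ) ≤ s := le_of_lt hv4
    have h3 : 1 - (1+s^2) * ((186269/5000000 : ℝ)*(1+(329/100 : ℝ)-s^2)) ≤ 0.4634 * s := by
      nlinarith [sq_nonneg (s - (3657/2000 : ℝ)), sq_nonneg (s*s - (13373649/4000000 : ℝ)), sq_nonneg (s - (1801/1000 : ℝ)), sq_nonneg ((232/125 : ℝ) - s), mul_nonneg (sub_nonneg.mpr hu) (sub_nonneg.mpr hv5), sq_nonneg s]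
    rw [hsx] at h3
    linarith
  rcases le_or_gt s (2117/1000 : ℝ) with hv6 | hv6
  · have ht := tangent_lb (361/100 : ℝ) (135259/5000000 : ℝ) x (by norm_num) hexp6
    have h2 : 1 - (1 + x) * Real.exp (-x) ≤ 1 - (1+x) * ((135259/5000000 : ℝ)*(1+(361/100 : ℝ)-x)) := by
      nlinarith [ht]
    have hu : (232/125 : ℝ) ≤ s := le_of_lt hv5
    have h3 : 1 - (1+s^2) * ((135259/5000000 : ℝ)*(1+(361/100 : ℝ)-s^2)) ≤ 0.4634 * s := by
      nlinarith [sq_nonneg (s - (3973/2000 : ℝ)), sq_nonneg (s*s - (15784729/4000000 : ℝ)), sq_nonneg (s - (232/125 : ℝ)), sq_nonneg ((2117/1000 : ℝ) - s), mul_nonneg (sub_nonneg.mpr hu) (sub_nonneg.mpr hv6), sq_nonneg s]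
    rw [hsx] at h3
    linarith
  rcases le_or_gt s (54/25 : ℝ) with hv7 | hv7
  · have ht := tangent_lb (112/25 : ℝ) (113333/10000000 : ℝ) x (by norm_num) hexp7
    have h2 : 1 - (1 + x) * Real.exp (-x) ≤ 1 - (1+x) * ((113333/10000000 : ℝ)*(1+(112/25 : ℝ)-x)) := by
      nlinarith [ht]
    have hu : (2117/1000 : ℝ) ≤ s := le_of_lt hv6
    have h3 : 1 - (1+s^2) * ((113333/10000000 : ℝ)*(1+(112/25 : ℝ)-s^2)) ≤ 0.4634 * s := by
      nlinarith [sq_nonneg (s - (4277/2000 : ℝ)), sq_nonneg (s*s - (18292729/4000000 : ℝ)), sq_nonneg (s - (2117/1000 : ℝ)), sq_nonneg ((54/25 : ℝ) - s), mul_nonneg (sub_nonneg.mpr hu) (sub_nonneg.mpr hv7), sq_nonneg s]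
    rw [hsx] at h3
    linarith
  · have h1 : 0 ≤ (1 + x) * Real.exp (-x) :=
      mul_nonneg (by linarith) (Real.exp_pos _).le
    nlinarith [h1]
end

section
/- For all x > 0, we have e^{-2x} + (1-e^{-x})^2/x ≤ 1.2147/(1+x). -/
lemma cubic_lb (y : ℝ) (h0 : 0 ≤ y) (h1 : y ≤ 1) :
    1 - y + y^2/2 - y^3/6 ≤ Real.exp (-y) := by
  have h := Real.exp_bound (x := -y) (by rwa [abs_neg, abs_of_nonneg h0]) (n := 5) (by norm_num)
  rw [abs_le] at h
  simp only [Finset.sum_range_succ, Finset.sum_range_zero, abs_neg, abs_of_nonneg h0,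
    Nat.factorial] at h
  norm_num [neg_pow] at h
  nlinarith [h.1, pow_le_pow_left₀ h0 h1 5, pow_le_pow_left₀ h0 h1 4]

lemma phi_nonneg (x : ℝ) : (1 + x) * Real.exp (-x) ≤ 1 := by
  have h := Real.add_one_le_exp x
  have h2 := mul_le_mul_of_nonneg_right h (Real.exp_pos (-x)).le
  rw [← Real.exp_add] at h2
  simp at h2
  linarith

lemma exp_taylor_bounds (c : ℝ) (h0 : 0 ≤ c) (h1 : c ≤ 1) :
    1 - c + c^2/2 - c^3/6 + c^4/24 - c^5/120 + c^6/720 - c^7/5040 + c^8/40320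
      - c^9/362880 + c^10/3628800 - c^11/36590400 ≤ Real.exp (-c) ∧
    Real.exp (-c) ≤ 1 - c + c^2/2 - c^3/6 + c^4/24 - c^5/120 + c^6/720 - c^7/5040
      + c^8/40320 - c^9/362880 + c^10/3628800 + c^11/36590400 := by
  have h := Real.exp_bound (x := -c) (by rwa [abs_neg, abs_of_nonneg h0]) (n := 11) (by norm_num)
  rw [abs_le] at h
  simp only [Finset.sum_range_succ, Finset.sum_range_zero, abs_neg, abs_of_nonneg h0,
    Nat.factorial] at h
  norm_num [neg_pow] at h
  constructor <;> nlinarith [h.1, h.2]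

lemma slope_aux (a t : ℝ) (ha : 1 ≤ a) (ht0 : 0 ≤ t) (ht2 : t ≤ 1) :
    1 + a - a*t ≤ (1+a+t) * Real.exp (-t) := by
  have hA := cubic_lb t ht0 ht2
  nlinarith [mul_le_mul_of_nonneg_left hA (show (0:ℝ) ≤ 1+a+t by linarith),
    mul_nonneg (mul_nonneg (sq_nonneg t) (sub_nonneg.2 ha)) (show (0:ℝ) ≤ 3 - t by linarith),
    mul_nonneg (mul_nonneg (mul_nonneg ht0 ht0) ht0) (sub_nonneg.2 ht2)]

lemma conv_aux (a h c0 m t : ℝ) (hh0 : 0 < h) (ht0 : 0 ≤ t) (ht1 : t ≤ h)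
    (C1 : c0^2 ≤ 0.2147 * a) (C2 : (c0 + h*m)^2 ≤ 0.2147 * (a+h)) :
    (c0 + t*m)^2 ≤ 0.2147 * (a + t) := by
  nlinarith [mul_nonneg (sub_nonneg.2 ht1) (sub_nonneg.2 C1),
    mul_nonneg ht0 (sub_nonneg.2 C2),
    mul_nonneg (mul_nonneg (mul_nonneg hh0.le (sq_nonneg m)) ht0) (sub_nonneg.2 ht1), hh0]

lemma interval_step {a h c0 m x : ℝ} (ha : 1 ≤ a) (hh0 : 0 < h) (hh1 : h ≤ 1)
    (hc0 : 1 - (1+a) * Real.exp (-a) ≤ c0) (hm : a * Real.exp (-a) ≤ m) (hm0 : 0 ≤ m)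
    (hx1 : a ≤ x) (hx2 : x ≤ a + h)
    (C1 : c0^2 ≤ 0.2147 * a) (C2 : (c0 + h*m)^2 ≤ 0.2147 * (a+h)) :
    (1 - (1+x) * Real.exp (-x))^2 ≤ 0.2147 * x := by
  have ht0 : 0 ≤ x - a := by linarith
  have ht1 : x - a ≤ h := by linarith
  have hE : (0:ℝ) < Real.exp (-a) := Real.exp_pos _
  have hex : Real.exp (-x) = Real.exp (-a) * Real.exp (-(x-a)) := by
    rw [← Real.exp_add]; ring_nf
  have h1 := slope_aux a (x-a) ha ht0 (le_trans ht1 hh1)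
  have hslope : (1 + a - a*(x-a)) * Real.exp (-a) ≤ (1+x) * Real.exp (-x) := by
    rw [hex]
    have h2 := mul_le_mul_of_nonneg_right h1 hE.le
    nlinarith [h2]
  have hphi_ub : 1 - (1+x)*Real.exp (-x) ≤ c0 + (x-a) * m := by
    have h2 : (x-a) * (a * Real.exp (-a)) ≤ (x-a) * m := mul_le_mul_of_nonneg_left hm ht0
    nlinarith [hslope]
  have hphi_lb : 0 ≤ 1 - (1+x)*Real.exp (-x) := by
    have := phi_nonneg x; linarith
  have hq := conv_aux a h c0 m (x-a) hh0 ht0 ht1 C1 C2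
  have hfin := pow_le_pow_left₀ hphi_lb hphi_ub 2
  nlinarith [hfin, hq]

lemma expL0 : (((8187307530779/10000000000000):ℝ))^5 ≤ Real.exp (-(100/100) : ℝ) := by
  have hb := exp_taylor_bounds (100/500) (by norm_num) (by norm_num)
  have hl : ((8187307530779/10000000000000):ℝ) ≤ Real.exp (-(100/500)) := le_trans (by norm_num) hb.1
  have he : Real.exp (-(100/100) : ℝ) = Real.exp (-(100/500)) ^ 5 := by
    rw [← Real.exp_nat_mul]; norm_num
  rw [he]; exact pow_le_pow_left₀ (by norm_num) hl 5

lemma expU0 : Real.exp (-(100/100) : ℝ) ≤ (((409365376539/500000000000):ℝ))^5 := by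
  have hb := exp_taylor_bounds (100/500) (by norm_num) (by norm_num)
  have hu : Real.exp (-(100/500)) ≤ ((409365376539/500000000000):ℝ) := hb.2.trans (by norm_num)
  have he : Real.exp (-(100/100) : ℝ) = Real.exp (-(100/500)) ^ 5 := by
    rw [← Real.exp_nat_mul]; norm_num
  rw [he]; exact pow_le_pow_left₀ (Real.exp_pos _).le hu 5

lemma expL1 : (((1573255722133/2000000000000):ℝ))^5 ≤ Real.exp (-(120/100) : ℝ) := by
  have hb := exp_taylor_bounds (120/500) (by norm_num) (by norm_num)
  have hl : ((1573255722133/2000000000000):ℝ) ≤ Real.exp (-(120/500)) := le_trans (by norm_num) hb.1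
  have he : Real.exp (-(120/100) : ℝ) = Real.exp (-(120/500)) ^ 5 := by
    rw [← Real.exp_nat_mul]; norm_num
  rw [he]; exact pow_le_pow_left₀ (by norm_num) hl 5

lemma expU1 : Real.exp (-(120/100) : ℝ) ≤ (((3933139305333/5000000000000):ℝ))^5 := by
  have hb := exp_taylor_bounds (120/500) (by norm_num) (by norm_num)
  have hu : Real.exp (-(120/500)) ≤ ((3933139305333/5000000000000):ℝ) := hb.2.trans (by norm_num)
  have he : Real.exp (-(120/100) : ℝ) = Real.exp (-(120/500)) ^ 5 := by
    rw [← Real.exp_nat_mul]; norm_num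
  rw [he]; exact pow_le_pow_left₀ (Real.exp_pos _).le hu 5

lemma expL2 : (((3324894394111/5000000000000):ℝ))^5 ≤ Real.exp (-(204/100) : ℝ) := by
  have hb := exp_taylor_bounds (204/500) (by norm_num) (by norm_num)
  have hl : ((3324894394111/5000000000000):ℝ) ≤ Real.exp (-(204/500)) := le_trans (by norm_num) hb.1
  have he : Real.exp (-(204/100) : ℝ) = Real.exp (-(204/500)) ^ 5 := by
    rw [← Real.exp_nat_mul]; norm_num
  rw [he]; exact pow_le_pow_left₀ (by norm_num) hl 5

lemma expU2 : Real.exp (-(204/100) : ℝ) ≤ (((6649788788251/10000000000000):ℝ))^5 := by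
  have hb := exp_taylor_bounds (204/500) (by norm_num) (by norm_num)
  have hu : Real.exp (-(204/500)) ≤ ((6649788788251/10000000000000):ℝ) := hb.2.trans (by norm_num)
  have he : Real.exp (-(204/100) : ℝ) = Real.exp (-(204/500)) ^ 5 := by
    rw [← Real.exp_nat_mul]; norm_num
  rw [he]; exact pow_le_pow_left₀ (Real.exp_pos _).le hu 5

lemma expL3 : (((6077449349009/10000000000000):ℝ))^5 ≤ Real.exp (-(249/100) : ℝ) := by
  have hb := exp_taylor_bounds (249/500) (by norm_num) (by norm_num)
  have hl : ((6077449349009/10000000000000):ℝ) ≤ Real.exp (-(249/500)) := le_trans (by norm_num) hb.1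
  have he : Real.exp (-(249/100) : ℝ) = Real.exp (-(249/500)) ^ 5 := by
    rw [← Real.exp_nat_mul]; norm_num
  rw [he]; exact pow_le_pow_left₀ (by norm_num) hl 5

lemma expU3 : Real.exp (-(249/100) : ℝ) ≤ (((1215489869853/2000000000000):ℝ))^5 := by
  have hb := exp_taylor_bounds (249/500) (by norm_num) (by norm_num)
  have hu : Real.exp (-(249/500)) ≤ ((1215489869853/2000000000000):ℝ) := hb.2.trans (by norm_num)
  have he : Real.exp (-(249/100) : ℝ) = Real.exp (-(249/500)) ^ 5 := by
    rw [← Real.exp_nat_mul]; norm_num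
  rw [he]; exact pow_le_pow_left₀ (Real.exp_pos _).le hu 5

lemma expL4 : (((5746466205843/10000000000000):ℝ))^5 ≤ Real.exp (-(277/100) : ℝ) := by
  have hb := exp_taylor_bounds (277/500) (by norm_num) (by norm_num)
  have hl : ((5746466205843/10000000000000):ℝ) ≤ Real.exp (-(277/500)) := le_trans (by norm_num) hb.1
  have he : Real.exp (-(277/100) : ℝ) = Real.exp (-(277/500)) ^ 5 := by
    rw [← Real.exp_nat_mul]; norm_num
  rw [he]; exact pow_le_pow_left₀ (by norm_num) hl 5

lemma expU4 : Real.exp (-(277/100) : ℝ) ≤ (((5746466206669/10000000000000):ℝ))^5 := by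
  have hb := exp_taylor_bounds (277/500) (by norm_num) (by norm_num)
  have hu : Real.exp (-(277/500)) ≤ ((5746466206669/10000000000000):ℝ) := hb.2.trans (by norm_num)
  have he : Real.exp (-(277/100) : ℝ) = Real.exp (-(277/500)) ^ 5 := by
    rw [← Real.exp_nat_mul]; norm_num
  rw [he]; exact pow_le_pow_left₀ (Real.exp_pos _).le hu 5

lemma expL5 : (((138581821181/250000000000):ℝ))^5 ≤ Real.exp (-(295/100) : ℝ) := by
  have hb := exp_taylor_bounds (295/500) (by norm_num) (by norm_num)
  have hl : ((138581821181/250000000000):ℝ) ≤ Real.exp (-(295/500)) := le_trans (by norm_num) hb.1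
  have he : Real.exp (-(295/100) : ℝ) = Real.exp (-(295/500)) ^ 5 := by
    rw [← Real.exp_nat_mul]; norm_num
  rw [he]; exact pow_le_pow_left₀ (by norm_num) hl 5

lemma expU5 : Real.exp (-(295/100) : ℝ) ≤ (((554327284889/1000000000000):ℝ))^5 := by
  have hb := exp_taylor_bounds (295/500) (by norm_num) (by norm_num)
  have hu : Real.exp (-(295/500)) ≤ ((554327284889/1000000000000):ℝ) := hb.2.trans (by norm_num)
  have he : Real.exp (-(295/100) : ℝ) = Real.exp (-(295/500)) ^ 5 := by
    rw [← Real.exp_nat_mul]; norm_num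
  rw [he]; exact pow_le_pow_left₀ (Real.exp_pos _).le hu 5

lemma expL6 : (((2711326266491/5000000000000):ℝ))^5 ≤ Real.exp (-(306/100) : ℝ) := by
  have hb := exp_taylor_bounds (306/500) (by norm_num) (by norm_num)
  have hl : ((2711326266491/5000000000000):ℝ) ≤ Real.exp (-(306/500)) := le_trans (by norm_num) hb.1
  have he : Real.exp (-(306/100) : ℝ) = Real.exp (-(306/500)) ^ 5 := by
    rw [← Real.exp_nat_mul]; norm_num
  rw [he]; exact pow_le_pow_left₀ (by norm_num) hl 5

lemma expU6 : Real.exp (-(306/100) : ℝ) ≤ (((677831566931/1250000000000):ℝ))^5 := by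
  have hb := exp_taylor_bounds (306/500) (by norm_num) (by norm_num)
  have hu : Real.exp (-(306/500)) ≤ ((677831566931/1250000000000):ℝ) := hb.2.trans (by norm_num)
  have he : Real.exp (-(306/100) : ℝ) = Real.exp (-(306/500)) ^ 5 := by
    rw [← Real.exp_nat_mul]; norm_num
  rw [he]; exact pow_le_pow_left₀ (Real.exp_pos _).le hu 5

lemma expL7 : (((5357969576477/10000000000000):ℝ))^5 ≤ Real.exp (-(312/100) : ℝ) := by
  have hb := exp_taylor_bounds (312/500) (by norm_num) (by norm_num)
  have hl : ((5357969576477/10000000000000):ℝ) ≤ Real.exp (-(312/500)) := le_trans (by norm_num) hb.1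
  have he : Real.exp (-(312/100) : ℝ) = Real.exp (-(312/500)) ^ 5 := by
    rw [← Real.exp_nat_mul]; norm_num
  rw [he]; exact pow_le_pow_left₀ (by norm_num) hl 5

lemma expU7 : Real.exp (-(312/100) : ℝ) ≤ (((5357969579531/10000000000000):ℝ))^5 := by
  have hb := exp_taylor_bounds (312/500) (by norm_num) (by norm_num)
  have hu : Real.exp (-(312/500)) ≤ ((5357969579531/10000000000000):ℝ) := hb.2.trans (by norm_num)
  have he : Real.exp (-(312/100) : ℝ) = Real.exp (-(312/500)) ^ 5 := by
    rw [← Real.exp_nat_mul]; norm_num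
  rw [he]; exact pow_le_pow_left₀ (Real.exp_pos _).le hu 5

lemma expL8 : (((8305120029/15625000000):ℝ))^5 ≤ Real.exp (-(316/100) : ℝ) := by
  have hb := exp_taylor_bounds (316/500) (by norm_num) (by norm_num)
  have hl : ((8305120029/15625000000):ℝ) ≤ Real.exp (-(316/500)) := le_trans (by norm_num) hb.1
  have he : Real.exp (-(316/100) : ℝ) = Real.exp (-(316/500)) ^ 5 := by
    rw [← Real.exp_nat_mul]; norm_num
  rw [he]; exact pow_le_pow_left₀ (by norm_num) hl 5

lemma expU8 : Real.exp (-(316/100) : ℝ) ≤ (((664409602759/1250000000000):ℝ))^5 := by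
  have hb := exp_taylor_bounds (316/500) (by norm_num) (by norm_num)
  have hu : Real.exp (-(316/500)) ≤ ((664409602759/1250000000000):ℝ) := hb.2.trans (by norm_num)
  have he : Real.exp (-(316/100) : ℝ) = Real.exp (-(316/500)) ^ 5 := by
    rw [← Real.exp_nat_mul]; norm_num
  rw [he]; exact pow_le_pow_left₀ (Real.exp_pos _).le hu 5

lemma expL9 : (((5283480641541/10000000000000):ℝ))^5 ≤ Real.exp (-(319/100) : ℝ) := by
  have hb := exp_taylor_bounds (319/500) (by norm_num) (by norm_num)
  have hl : ((5283480641541/10000000000000):ℝ) ≤ Real.exp (-(319/500)) := le_trans (by norm_num) hb.1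
  have he : Real.exp (-(319/100) : ℝ) = Real.exp (-(319/500)) ^ 5 := by
    rw [← Real.exp_nat_mul]; norm_num
  rw [he]; exact pow_le_pow_left₀ (by norm_num) hl 5

lemma expU9 : Real.exp (-(319/100) : ℝ) ≤ (((2641740322719/5000000000000):ℝ))^5 := by
  have hb := exp_taylor_bounds (319/500) (by norm_num) (by norm_num)
  have hu : Real.exp (-(319/500)) ≤ ((2641740322719/5000000000000):ℝ) := hb.2.trans (by norm_num)
  have he : Real.exp (-(319/100) : ℝ) = Real.exp (-(319/500)) ^ 5 := by
    rw [← Real.exp_nat_mul]; norm_num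
  rw [he]; exact pow_le_pow_left₀ (Real.exp_pos _).le hu 5

lemma expL10 : (((81896584653/156250000000):ℝ))^5 ≤ Real.exp (-(323/100) : ℝ) := by
  have hb := exp_taylor_bounds (323/500) (by norm_num) (by norm_num)
  have hl : ((81896584653/156250000000):ℝ) ≤ Real.exp (-(323/500)) := le_trans (by norm_num) hb.1
  have he : Real.exp (-(323/100) : ℝ) = Real.exp (-(323/500)) ^ 5 := by
    rw [← Real.exp_nat_mul]; norm_num
  rw [he]; exact pow_le_pow_left₀ (by norm_num) hl 5

lemma expU10 : Real.exp (-(323/100) : ℝ) ≤ (((2620690711131/5000000000000):ℝ))^5 := by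
  have hb := exp_taylor_bounds (323/500) (by norm_num) (by norm_num)
  have hu : Real.exp (-(323/500)) ≤ ((2620690711131/5000000000000):ℝ) := hb.2.trans (by norm_num)
  have he : Real.exp (-(323/100) : ℝ) = Real.exp (-(323/500)) ^ 5 := by
    rw [← Real.exp_nat_mul]; norm_num
  rw [he]; exact pow_le_pow_left₀ (Real.exp_pos _).le hu 5

lemma expL11 : (((1017295037263/2000000000000):ℝ))^5 ≤ Real.exp (-(338/100) : ℝ) := by
  have hb := exp_taylor_bounds (338/500) (by norm_num) (by norm_num)
  have hl : ((1017295037263/2000000000000):ℝ) ≤ Real.exp (-(338/500)) := le_trans (by norm_num) hb.1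
  have he : Real.exp (-(338/100) : ℝ) = Real.exp (-(338/500)) ^ 5 := by
    rw [← Real.exp_nat_mul]; norm_num
  rw [he]; exact pow_le_pow_left₀ (by norm_num) hl 5

lemma expU11 : Real.exp (-(338/100) : ℝ) ≤ (((63580939921/125000000000):ℝ))^5 := by
  have hb := exp_taylor_bounds (338/500) (by norm_num) (by norm_num)
  have hu : Real.exp (-(338/500)) ≤ ((63580939921/125000000000):ℝ) := hb.2.trans (by norm_num)
  have he : Real.exp (-(338/100) : ℝ) = Real.exp (-(338/500)) ^ 5 := by
    rw [← Real.exp_nat_mul]; norm_num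
  rw [he]; exact pow_le_pow_left₀ (Real.exp_pos _).le hu 5

lemma expL12 : (((2128543431449/5000000000000):ℝ))^5 ≤ Real.exp (-(427/100) : ℝ) := by
  have hb := exp_taylor_bounds (427/500) (by norm_num) (by norm_num)
  have hl : ((2128543431449/5000000000000):ℝ) ≤ Real.exp (-(427/500)) := le_trans (by norm_num) hb.1
  have he : Real.exp (-(427/100) : ℝ) = Real.exp (-(427/500)) ^ 5 := by
    rw [← Real.exp_nat_mul]; norm_num
  rw [he]; exact pow_le_pow_left₀ (by norm_num) hl 5

lemma expU12 : Real.exp (-(427/100) : ℝ) ≤ (((851417391843/2000000000000):ℝ))^5 := by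
  have hb := exp_taylor_bounds (427/500) (by norm_num) (by norm_num)
  have hu : Real.exp (-(427/500)) ≤ ((851417391843/2000000000000):ℝ) := hb.2.trans (by norm_num)
  have he : Real.exp (-(427/100) : ℝ) = Real.exp (-(427/500)) ^ 5 := by
    rw [← Real.exp_nat_mul]; norm_num
  rw [he]; exact pow_le_pow_left₀ (Real.exp_pos _).le hu 5

set_option maxHeartbeats 2000000 in
lemma key_ineq (x : ℝ) (hx : 0 < x) :
    (1 - (1+x) * Real.exp (-x))^2 ≤ 0.2147 * x := by
  have hphi_lb : 0 ≤ 1 - (1+x)*Real.exp (-x) := by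
    have := phi_nonneg x; linarith
  rcases le_or_gt x 1 with h1 | h1
  · -- small case: 0 < x ≤ 1
    have hA := cubic_lb x hx.le h1
    have hQ : 1 - (1+x)*Real.exp (-x) ≤ x^2/2 - x^3/3 + x^4/6 := by
      nlinarith [mul_le_mul_of_nonneg_left hA (show (0:ℝ) ≤ 1 + x by linarith)]
    have hQ0 : (0:ℝ) ≤ x^2/2 - x^3/3 + x^4/6 := by nlinarith [sq_nonneg (x-1), sq_nonneg x]
    have hfin := pow_le_pow_left₀ hphi_lb hQ 2
    have hu0 : 0 ≤ 1 - x := by linarith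
    have e1 : x^3 * (1-x) ≥ 0 := by positivity
    have key : x^3 * (3-x)^2 ≤ 7.7292 := by
      nlinarith [mul_nonneg hu0 hx.le, mul_nonneg (mul_nonneg hu0 hu0) hu0,
        mul_nonneg (mul_nonneg (mul_nonneg hu0 hu0) hu0) hu0,
        mul_nonneg (mul_nonneg (mul_nonneg (mul_nonneg hu0 hu0) hu0) hu0) hu0,
        mul_nonneg (mul_nonneg hu0 hu0) hx.le, sq_nonneg (1-x)]
    have s1 : x^2/2 - x^3/3 + x^4/6 ≤ x^2/2 - x^3/6 := by nlinarith [e1]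
    have s3 := pow_le_pow_left₀ hQ0 s1 2
    have s4 : (x^2/2 - x^3/6)^2 = x^4 * (3-x)^2/36 := by ring
    nlinarith [hfin, s3, s4, key, mul_le_mul_of_nonneg_right
      (show x^4 * (3-x)^2 ≤ 7.7292 * x from by
        nlinarith [mul_le_mul_of_nonneg_right key hx.le])
      (by norm_num : (0:ℝ) ≤ 1/36)]
  rcases le_or_gt x (466/100) with htail | htail
  swap
  · -- tail : x >= 4.66
    have hg : 0 ≤ (1+x) * Real.exp (-x) := by positivity
    nlinarith [phi_nonneg x, hg, htail]
  ·
    rcases le_or_gt x (120/100) with hc0 | hc0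
    · exact interval_step (a := 100/100) (h := (20/100)) (c0 := (165150698535927/625000000000000)) (m := (3678794411714831/10000000000000000))
        (by norm_num) (by norm_num) (by norm_num)
        (by nlinarith [expL0]) (by nlinarith [expU0]) (by norm_num)
        (by linarith) (by linarith) (by norm_num) (by norm_num)
    rcases le_or_gt x (204/100) with hc1 | hc1
    · exact interval_step (a := 120/100) (h := (84/100)) (c0 := (843431834483451/2500000000000000)) (m := (451791317868437/1250000000000000))
        (by norm_num) (by norm_num) (by norm_num)
        (by nlinarith [expL1]) (by nlinarith [expU1]) (by norm_num)
        (by linarith) (by linarith) (by norm_num) (by norm_num)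
    rcases le_or_gt x (249/100) with hc2 | hc2
    · exact interval_step (a := 204/100) (h := (45/100)) (c0 := (6047127189301853/10000000000000000)) (m := (2652585701973703/10000000000000000))
        (by norm_num) (by norm_num) (by norm_num)
        (by nlinarith [expL2]) (by nlinarith [expU2]) (by norm_num)
        (by linarith) (by linarith) (by norm_num) (by norm_num)
    rcases le_or_gt x (277/100) with hc3 | hc3
    · exact interval_step (a := 249/100) (h := (28/100)) (c0 := (7106442166564329/10000000000000000)) (m := (2064458168129597/10000000000000000))
        (by norm_num) (by norm_num) (by norm_num)
        (by nlinarith [expL3]) (by nlinarith [expU3]) (by norm_num)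
        (by linarith) (by linarith) (by norm_num) (by norm_num)
    rcases le_or_gt x (295/100) with hc4 | hc4
    · exact interval_step (a := 277/100) (h := (18/100)) (c0 := (7637642421327007/10000000000000000)) (m := (867868766263553/5000000000000000))
        (by norm_num) (by norm_num) (by norm_num)
        (by nlinarith [expL4]) (by nlinarith [expU4]) (by norm_num)
        (by linarith) (by linarith) (by norm_num) (by norm_num)
    rcases le_or_gt x (306/100) with hc5 | hc5
    · exact interval_step (a := 295/100) (h := (11/100)) (c0 := (991572701904107/1250000000000000)) (m := (1544021327630377/10000000000000000))
        (by norm_num) (by norm_num) (by norm_num)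
        (by nlinarith [expL5]) (by nlinarith [expU5]) (by norm_num)
        (by linarith) (by linarith) (by norm_num) (by norm_num)
    rcases le_or_gt x (312/100) with hc6 | hc6
    · exact interval_step (a := 306/100) (h := (6/100)) (c0 := (1619271914869101/2000000000000000)) (m := (286952695357041/2000000000000000))
        (by norm_num) (by norm_num) (by norm_num)
        (by nlinarith [expL6]) (by nlinarith [expU6]) (by norm_num)
        (by linarith) (by linarith) (by norm_num) (by norm_num)
    rcases le_or_gt x (316/100) with hc7 | hc7
    · exact interval_step (a := 312/100) (h := (4/100)) (c0 := (4090362330722029/5000000000000000)) (m := (1377703658366823/10000000000000000))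
        (by norm_num) (by norm_num) (by norm_num)
        (by nlinarith [expL7]) (by nlinarith [expU7]) (by norm_num)
        (by linarith) (by linarith) (by norm_num) (by norm_num)
    rcases le_or_gt x (319/100) with hc8 | hc8
    · exact interval_step (a := 316/100) (h := (3/100)) (c0 := (1647017834285579/2000000000000000)) (m := (670326711143377/5000000000000000))
        (by norm_num) (by norm_num) (by norm_num)
        (by nlinarith [expL8]) (by nlinarith [expU8]) (by norm_num)
        (by linarith) (by linarith) (by norm_num) (by norm_num)
    rcases le_or_gt x (323/100) with hc9 | hc9
    · exact interval_step (a := 319/100) (h := (4/100)) (c0 := (2068724652016487/2500000000000000)) (m := (1313382687485553/10000000000000000))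
        (by norm_num) (by norm_num) (by norm_num)
        (by nlinarith [expL9]) (by nlinarith [expU9]) (by norm_num)
        (by linarith) (by linarith) (by norm_num) (by norm_num)
    rcases le_or_gt x (338/100) with hc10 | hc10
    · exact interval_step (a := 323/100) (h := (15/100)) (c0 := (8326717801715801/10000000000000000)) (m := (319426803989621/2500000000000000))
        (by norm_num) (by norm_num) (by norm_num)
        (by nlinarith [expL10]) (by nlinarith [expU10]) (by norm_num)
        (by linarith) (by linarith) (by norm_num) (by norm_num)
    rcases le_or_gt x (427/100) with hc11 | hc11
    · exact interval_step (a := 338/100) (h := (89/100)) (c0 := (4254360741670061/5000000000000000)) (m := (230160795561767/2000000000000000))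
        (by norm_num) (by norm_num) (by norm_num)
        (by nlinarith [expL11]) (by nlinarith [expU11]) (by norm_num)
        (by linarith) (by linarith) (by norm_num) (by norm_num)
    rcases le_or_gt x (466/100) with hc12 | hc12
    · exact interval_step (a := 427/100) (h := (39/100)) (c0 := (9263160033842881/10000000000000000)) (m := (298511101652597/5000000000000000))
        (by norm_num) (by norm_num) (by norm_num)
        (by nlinarith [expL12]) (by nlinarith [expU12]) (by norm_num)
        (by linarith) (by linarith) (by norm_num) (by norm_num)
    · linarith

theorem exp_sq_sum_le (x : ℝ) (hx : 0 < x) :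
    Real.exp (-2 * x) + (1 - Real.exp (-x)) ^ 2 / x ≤ 1.2147 / (1 + x) := by
  have hK := key_ineq x hx
  have h1x : (0:ℝ) < 1 + x := by linarith
  have he2 : Real.exp (-2 * x) = Real.exp (-x) ^ 2 := by
    rw [show (-2*x : ℝ) = (2:ℕ) * (-x) by push_cast; ring, Real.exp_nat_mul]
  rw [he2, le_div_iff₀ h1x]
  have hid : (Real.exp (-x)^2 + (1 - Real.exp (-x))^2/x) * (1+x)
      = (Real.exp (-x)^2 * x * (1+x) + (1 - Real.exp (-x))^2 * (1+x)) / x := by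
    field_simp
  rw [hid, div_le_iff₀ hx]
  nlinarith [hK]
end

section
/- For any real symmetric positive semidefinite p×p matrix X, X^+ (I - exp(-X))^2 ⪯ 1.6862 · X (I+X)^{-2} in the Loewner order. -/
open Matrix
/-- `Xp` is the Moore–Penrose pseudoinverse of `X`, expressed via the four
Penrose conditions. -/
def IsMoorePenroseInv {p : ℕ} (X Xp : Matrix (Fin p) (Fin p) ℝ) : Prop :=
  X * Xp * X = X ∧ Xp * X * Xp = Xp ∧ (X * Xp)ᵀ = X * Xp ∧ (Xp * X)ᵀ = Xp * X

/-! ### Scalar analytic lemmas -/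

private lemma nonneg_of_deriv (f f' : ℝ → ℝ) (hd : ∀ x, HasDerivAt f (f' x) x)
    (h0 : f 0 = 0) (hf' : ∀ x, 0 ≤ x → 0 ≤ f' x) : ∀ x, 0 ≤ x → 0 ≤ f x := by
  intro x hx
  have hmono : MonotoneOn f (Set.Ici 0) := by
    apply monotoneOn_of_deriv_nonneg (convex_Ici 0)
    · exact fun y _ => (hd y).continuousAt.continuousWithinAt
    · exact fun y _ => (hd y).differentiableAt.differentiableWithinAt
    · intro y hy
      rw [(hd y).deriv]
      exact hf' y (le_of_lt (by simpa using hy))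
  have := hmono (Set.self_mem_Ici) hx hx
  rwa [h0] at this

private lemma expP2 : ∀ x : ℝ, 0 ≤ x → Real.exp (-x) ≤ 1 - x + x^2/2 := by
  intro x hx
  have := nonneg_of_deriv (fun x => 1 - x + x^2/2 - Real.exp (-x))
    (fun x => -1 + x + Real.exp (-x)) ?_ (by norm_num) ?_ x hx
  · linarith
  · intro y
    have h1 : HasDerivAt (fun x : ℝ => Real.exp (-x)) (-Real.exp (-y)) y := by
      simpa using (HasDerivAt.exp (hasDerivAt_neg y))
    have h2 : HasDerivAt (fun x : ℝ => 1 - x + x^2/2) (-1 + y) y := by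
      have := ((hasDerivAt_pow 2 y).div_const 2)
      have h3 := ((hasDerivAt_const y (1:ℝ)).fun_sub (hasDerivAt_id' (x := y))).fun_add this
      simpa using h3
    simpa using h2.fun_sub h1
  · intro y _
    show (0:ℝ) ≤ -1 + y + Real.exp (-y)
    have := Real.add_one_le_exp (-y)
    linarith

private lemma expP3 : ∀ x : ℝ, 0 ≤ x → 1 - x + x^2/2 - x^3/6 ≤ Real.exp (-x) := by
  intro x hx
  have := nonneg_of_deriv (fun x => Real.exp (-x) - (1 - x + x^2/2 - x^3/6))
    (fun x => -Real.exp (-x) + (1 - x + x^2/2)) ?_ (by norm_num) ?_ x hx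
  · linarith
  · intro y
    have h1 : HasDerivAt (fun x : ℝ => Real.exp (-x)) (-Real.exp (-y)) y := by
      simpa using (HasDerivAt.exp (hasDerivAt_neg y))
    have h2 : HasDerivAt (fun x : ℝ => 1 - x + x^2/2 - x^3/6) (-1 + y - y^2/2) y := by
      have p2 := ((hasDerivAt_pow 2 y).div_const 2)
      have p3 := ((hasDerivAt_pow 3 y).div_const 6)
      have h3 := (((hasDerivAt_const y (1:ℝ)).fun_sub (hasDerivAt_id' (x := y))).fun_add p2).fun_sub p3
      exact h3.congr_deriv (by ring)
    have := h1.fun_sub h2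
    exact this.congr_deriv (by ring)
  · intro y hy
    show (0:ℝ) ≤ -Real.exp (-y) + (1 - y + y^2/2)
    have := expP2 y hy
    linarith

private lemma expP4 : ∀ x : ℝ, 0 ≤ x → Real.exp (-x) ≤ 1 - x + x^2/2 - x^3/6 + x^4/24 := by
  intro x hx
  have := nonneg_of_deriv (fun x => 1 - x + x^2/2 - x^3/6 + x^4/24 - Real.exp (-x))
    (fun x => -(1 - x + x^2/2 - x^3/6) + Real.exp (-x)) ?_ (by norm_num) ?_ x hx
  · linarith
  · intro y
    have h1 : HasDerivAt (fun x : ℝ => Real.exp (-x)) (-Real.exp (-y)) y := by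
      simpa using (HasDerivAt.exp (hasDerivAt_neg y))
    have h2 : HasDerivAt (fun x : ℝ => 1 - x + x^2/2 - x^3/6 + x^4/24) (-1 + y - y^2/2 + y^3/6) y := by
      have p2 := ((hasDerivAt_pow 2 y).div_const 2)
      have p3 := ((hasDerivAt_pow 3 y).div_const 6)
      have p4 := ((hasDerivAt_pow 4 y).div_const 24)
      have h3 := ((((hasDerivAt_const y (1:ℝ)).fun_sub (hasDerivAt_id' (x := y))).fun_add p2).fun_sub p3).fun_add p4
      exact h3.congr_deriv (by ring)
    have := h2.fun_sub h1
    exact this.congr_deriv (by ring)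
  · intro y hy
    show (0:ℝ) ≤ -(1 - y + y^2/2 - y^3/6) + Real.exp (-y)
    have := expP3 y hy
    linarith

private lemma expP5 : ∀ x : ℝ, 0 ≤ x → 1 - x + x^2/2 - x^3/6 + x^4/24 - x^5/120 ≤ Real.exp (-x) := by
  intro x hx
  have := nonneg_of_deriv (fun x => Real.exp (-x) - (1 - x + x^2/2 - x^3/6 + x^4/24 - x^5/120))
    (fun x => -Real.exp (-x) + (1 - x + x^2/2 - x^3/6 + x^4/24)) ?_ (by norm_num) ?_ x hx
  · linarith
  · intro y
    have h1 : HasDerivAt (fun x : ℝ => Real.exp (-x)) (-Real.exp (-y)) y := by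
      simpa using (HasDerivAt.exp (hasDerivAt_neg y))
    have h2 : HasDerivAt (fun x : ℝ => 1 - x + x^2/2 - x^3/6 + x^4/24 - x^5/120)
        (-1 + y - y^2/2 + y^3/6 - y^4/24) y := by
      have p2 := ((hasDerivAt_pow 2 y).div_const 2)
      have p3 := ((hasDerivAt_pow 3 y).div_const 6)
      have p4 := ((hasDerivAt_pow 4 y).div_const 24)
      have p5 := ((hasDerivAt_pow 5 y).div_const 120)
      have h3 := (((((hasDerivAt_const y (1:ℝ)).fun_sub (hasDerivAt_id' (x := y))).fun_add p2).fun_sub p3).fun_add p4).fun_sub p5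
      exact h3.congr_deriv (by ring)
    have := h1.fun_sub h2
    exact this.congr_deriv (by ring)
  · intro y hy
    show (0:ℝ) ≤ -Real.exp (-y) + (1 - y + y^2/2 - y^3/6 + y^4/24)
    have := expP4 y hy
    linarith

/-- Degree five lower Taylor bound for `exp`, valid on all of `ℝ`. -/
private lemma expP5_all (u : ℝ) :
    1 + u + u^2/2 + u^3/6 + u^4/24 + u^5/120 ≤ Real.exp u := by
  rcases le_or_gt 0 u with h | h
  · have h6 := Real.sum_le_exp_of_nonneg h 6
    have hsum : ∑ i ∈ Finset.range 6, u ^ i / i.factorial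
        = 1 + u + u^2/2 + u^3/6 + u^4/24 + u^5/120 := by
      norm_num [Finset.sum_range_succ, Nat.factorial]
    linarith [hsum ▸ h6]
  · have h2 := expP5 (-u) (by linarith)
    rw [neg_neg] at h2
    nlinarith [h2]

private lemma exp09_le : Real.exp (9/10) ≤ 2459604/1000000 := by
  have h := Real.exp_bound (x := 9/10) (by rw [abs_le]; norm_num) (n := 8) (by norm_num)
  rw [abs_le] at h
  have h2 := h.2
  have hsum : ∑ m ∈ Finset.range 8, ((9:ℝ)/10) ^ m / m.factorial
      = 1 + 9/10 + 81/200 + 243/2000 + 2187/80000 + 19683/4000000 + 59049/80000000 + 531441/5600000000 := by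
    norm_num [Finset.sum_range_succ, Nat.factorial]
  rw [hsum] at h2
  rw [show |(9:ℝ)/10| = 9/10 from abs_of_pos (by norm_num)] at h2
  norm_num [Nat.factorial] at h2
  linarith

private lemma expE18 : (16528/100000 : ℝ) ≤ Real.exp (-(9/5)) := by
  have h18 : Real.exp (9/5) ≤ (2459604/1000000)^2 := by
    rw [show (9/5:ℝ) = 9/10 + 9/10 by norm_num, Real.exp_add]
    nlinarith [Real.exp_pos (9/10), exp09_le]
  have hprod : Real.exp (-(9/5)) * Real.exp (9/5) = 1 := by
    rw [← Real.exp_add]; norm_num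
  nlinarith [Real.exp_pos (-(9/5)), Real.exp_pos (9/5), h18,
    mul_nonneg (Real.exp_pos (-(9/5))).le (sub_nonneg.2 h18)]

/-- The key scalar inequality `(1+s)(1 - e^{-s}) ≤ 1.29853 s` for `s ≥ 0`. -/
private lemma key_ineq_s9 (s : ℝ) (hs : 0 ≤ s) :
    (1 + s) * (1 - Real.exp (-s)) ≤ (129853/100000) * s := by
  rcases le_or_gt s 1 with h1 | h1
  · -- region [0, 1]
    have h5 := expP5 s hs
    have hpoly : 0 ≤ (129853/100000 - 1) * s - 1
        + (1+s) * (1 - s + s^2/2 - s^3/6 + s^4/24 - s^5/120) := by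
      nlinarith [mul_nonneg hs (sub_nonneg.2 h1), mul_nonneg (mul_nonneg hs hs) (sub_nonneg.2 h1),
        mul_nonneg (mul_nonneg (mul_nonneg hs hs) hs) (sub_nonneg.2 h1),
        mul_nonneg (mul_nonneg (mul_nonneg (mul_nonneg hs hs) hs) hs) (sub_nonneg.2 h1),
        mul_nonneg hs hs]
    have hmul := mul_le_mul_of_nonneg_left h5 (by linarith : (0:ℝ) ≤ 1 + s)
    linarith
  rcases le_or_gt s 3.35 with h2 | h2
  · -- region [1, 3.35]
    have hband : 16528/100000 *
        (1 + (9/5-s) + (9/5-s)^2/2 + (9/5-s)^3/6 + (9/5-s)^4/24 + (9/5-s)^5/120)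
        ≤ Real.exp (-s) := by
      have hsplit : Real.exp (-s) = Real.exp (-(9/5)) * Real.exp (9/5 - s) := by
        rw [← Real.exp_add]; congr 1; ring
      have hP := expP5_all (9/5 - s)
      rcases le_or_gt 0 (1 + (9/5-s) + (9/5-s)^2/2 + (9/5-s)^3/6 + (9/5-s)^4/24 + (9/5-s)^5/120)
        with hQ | hQ
      · rw [hsplit]
        exact mul_le_mul expE18 hP hQ (Real.exp_pos _).le
      · nlinarith [Real.exp_pos (-s)]
    have hpoly : 0 ≤ (129853/100000 - 1) * s - 1
        + (1+s) * (16528/100000 *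
          (1 + (9/5-s) + (9/5-s)^2/2 + (9/5-s)^3/6 + (9/5-s)^4/24 + (9/5-s)^5/120)) := by
      nlinarith [sq_nonneg (s - 1.792), sq_nonneg ((s-1.792)*(s-3)),
        mul_nonneg (sub_nonneg.2 h1.le) (sub_nonneg.2 h2),
        mul_nonneg (mul_nonneg (sub_nonneg.2 h1.le) (sub_nonneg.2 h2)) (sq_nonneg (s-1.792)),
        sq_nonneg (s-3.35)]
    have hmul := mul_le_mul_of_nonneg_left hband (by linarith : (0:ℝ) ≤ 1 + s)
    linarith
  · -- region [3.35, ∞)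
    nlinarith [mul_pos (show (0:ℝ) < 1 + s by linarith) (Real.exp_pos (-s))]

/-- The main scalar inequality used entrywise. -/
private lemma scalar_main (s : ℝ) (hs : 0 < s) :
    s⁻¹ * ((1 - Real.exp (-s)) * (1 - Real.exp (-s)))
      ≤ (1.6862 : ℝ) * (s * ((1+s)⁻¹ * (1+s)⁻¹)) := by
  have h1s : (0:ℝ) < 1 + s := by linarith
  have hA0 : 0 ≤ 1 - Real.exp (-s) := by
    have := Real.exp_le_one_iff.mpr (by linarith : -s ≤ 0)
    linarith
  have hkey := key_ineq_s9 s hs.le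
  have hsq : (1 - Real.exp (-s)) * (1 - Real.exp (-s)) * ((1+s) * (1+s))
      ≤ 1.6862 * s * s := by
    nlinarith [hkey, hA0, mul_le_mul hkey hkey (mul_nonneg (by linarith) hA0) (by positivity)]
  rw [show (1+s)⁻¹ * (1+s)⁻¹ = ((1+s) * (1+s))⁻¹ by rw [mul_inv]]
  rw [show s⁻¹ * ((1 - Real.exp (-s)) * (1 - Real.exp (-s)))
      = ((1 - Real.exp (-s)) * (1 - Real.exp (-s))) / s by ring]
  rw [show (1.6862:ℝ) * (s * ((1+s) * (1+s))⁻¹) = (1.6862 * s) / ((1+s)*(1+s)) by ring]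
  rw [div_le_div_iff₀ hs (by positivity)]
  nlinarith [hsq]

/-! ### Conjugation by a unitary matrix -/

private def conjM {p : ℕ} (U : Matrix (Fin p) (Fin p) ℝ) (v : Fin p → ℝ) :
    Matrix (Fin p) (Fin p) ℝ :=
  U * Matrix.diagonal v * star U

section conjM

variable {p : ℕ} {U : Matrix (Fin p) (Fin p) ℝ}

private lemma conjM_mul (hU1 : star U * U = 1) (v w : Fin p → ℝ) :
    conjM U v * conjM U w = conjM U (fun i => v i * w i) := by
  unfold conjM
  have h : star U * (U * (Matrix.diagonal w * star U)) = Matrix.diagonal w * star U := by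
    rw [← mul_assoc, hU1, one_mul]
  simp only [mul_assoc]
  rw [h, ← mul_assoc (Matrix.diagonal v), Matrix.diagonal_mul_diagonal]

private lemma conjM_one (hU2 : U * star U = 1) : conjM U (fun _ => 1) = 1 := by
  unfold conjM
  rw [show Matrix.diagonal (fun _ : Fin p => (1:ℝ)) = 1 from Matrix.diagonal_one, mul_one, hU2]

private lemma star_eq_transpose' (M : Matrix (Fin p) (Fin p) ℝ) : star M = Mᵀ := by
  rw [Matrix.star_eq_conjTranspose, Matrix.conjTranspose_eq_transpose_of_trivial]

private lemma conjM_transpose (v : Fin p → ℝ) : (conjM U v)ᵀ = conjM U v := by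
  unfold conjM
  rw [star_eq_transpose' U]
  simp [Matrix.transpose_mul, Matrix.mul_assoc]

private lemma conjM_add (v w : Fin p → ℝ) :
    conjM U v + conjM U w = conjM U (fun i => v i + w i) := by
  unfold conjM
  rw [show Matrix.diagonal (fun i => v i + w i) = Matrix.diagonal v + Matrix.diagonal w by
    rw [Matrix.diagonal_add]]
  rw [mul_add, add_mul]

private lemma conjM_sub (v w : Fin p → ℝ) :
    conjM U v - conjM U w = conjM U (fun i => v i - w i) := by
  unfold conjM
  rw [show Matrix.diagonal (fun i => v i - w i) = Matrix.diagonal v - Matrix.diagonal w by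
    rw [Matrix.diagonal_sub]]
  rw [mul_sub, sub_mul]

private lemma conjM_smul (c : ℝ) (v : Fin p → ℝ) :
    c • conjM U v = conjM U (fun i => c * v i) := by
  unfold conjM
  rw [show Matrix.diagonal (fun i => c * v i) = c • Matrix.diagonal v from
    (Matrix.diagonal_smul c v)]
  rw [Matrix.mul_smul, Matrix.smul_mul]

private lemma conjM_neg (v : Fin p → ℝ) : -conjM U v = conjM U (fun i => -v i) := by
  unfold conjM
  rw [show Matrix.diagonal (fun i => -v i) = -Matrix.diagonal v by rw [Matrix.diagonal_neg]]
  rw [Matrix.mul_neg, Matrix.neg_mul]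

private lemma conjM_posSemidef (v : Fin p → ℝ) (hv : ∀ i, 0 ≤ v i) :
    (conjM U v).PosSemidef := by
  have h := (Matrix.posSemidef_diagonal_iff.mpr hv).mul_mul_conjTranspose_same U
  simpa [conjM, Matrix.star_eq_conjTranspose] using h

private lemma conjM_exp (hU1 : star U * U = 1) (hU2 : U * star U = 1) (v : Fin p → ℝ) :
    NormedSpace.exp (conjM U v) = conjM U (fun i => Real.exp (v i)) := by
  have hInv : Invertible U := invertibleOfRightInverse U _ hU2
  have hUnit : IsUnit U := isUnit_of_invertible U
  have hinv : U⁻¹ = star U := Matrix.inv_eq_right_inv hU2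
  unfold conjM
  rw [← hinv, Matrix.exp_conj U _ hUnit, Matrix.exp_diagonal, hinv]
  congr 1
  rw [Pi.exp_def]
  funext i
  rw [← Real.exp_eq_exp_ℝ]

private lemma conjM_inv (hU1 : star U * U = 1) (hU2 : U * star U = 1)
    (v : Fin p → ℝ) (hv : ∀ i, v i ≠ 0) :
    (conjM U v)⁻¹ = conjM U (fun i => (v i)⁻¹) := by
  apply Matrix.inv_eq_right_inv
  rw [conjM_mul hU1]
  rw [show (fun i => v i * (v i)⁻¹) = fun _ : Fin p => (1:ℝ) from
    funext fun i => mul_inv_cancel₀ (hv i)]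
  exact conjM_one hU2

private lemma conjM_isMP (hU1 : star U * U = 1) (hU2 : U * star U = 1) (d : Fin p → ℝ) :
    IsMoorePenroseInv (conjM U d) (conjM U (fun i => if d i = 0 then 0 else (d i)⁻¹)) := by
  refine ⟨?_, ?_, ?_, ?_⟩
  · calc conjM U d * conjM U (fun i => if d i = 0 then 0 else (d i)⁻¹) * conjM U d
        = conjM U (fun i => (d i * (if d i = 0 then 0 else (d i)⁻¹)) * d i) := by
          rw [conjM_mul hU1, conjM_mul hU1]
      _ = conjM U d := congrArg _ (funext fun i => by
          by_cases h : d i = 0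
          · simp [h]
          · rw [if_neg h]; field_simp)
  · calc conjM U (fun i => if d i = 0 then 0 else (d i)⁻¹) * conjM U d
          * conjM U (fun i => if d i = 0 then 0 else (d i)⁻¹)
        = conjM U (fun i => ((if d i = 0 then 0 else (d i)⁻¹) * d i)
            * (if d i = 0 then 0 else (d i)⁻¹)) := by
          rw [conjM_mul hU1, conjM_mul hU1]
      _ = conjM U (fun i => if d i = 0 then 0 else (d i)⁻¹) := congrArg _ (funext fun i => by
          by_cases h : d i = 0
          · simp [h]
          · simp only [if_neg h]
            field_simp)
  · rw [conjM_mul hU1, conjM_transpose]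
  · rw [conjM_mul hU1, conjM_transpose]

end conjM

/-- Uniqueness of the Moore–Penrose pseudoinverse. -/
private lemma isMoorePenroseInv_unique {p : ℕ} (X A B : Matrix (Fin p) (Fin p) ℝ)
    (hA : IsMoorePenroseInv X A) (hB : IsMoorePenroseInv X B) : A = B := by
  obtain ⟨hA1, hA2, hA3, hA4⟩ := hA
  obtain ⟨hB1, hB2, hB3, hB4⟩ := hB
  have hXAB : X * A = X * B := by
    calc X * A = X * B * X * A := by rw [hB1]
      _ = (X * B) * (X * A) := by rw [mul_assoc]
      _ = (X * B)ᵀ * (X * A)ᵀ := by rw [hB3, hA3]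
      _ = ((X * A) * (X * B))ᵀ := (Matrix.transpose_mul _ _).symm
      _ = ((X * A * X) * B)ᵀ := by simp only [mul_assoc]
      _ = (X * B)ᵀ := by rw [hA1]
      _ = X * B := hB3
  have hAXB : A * X = B * X := by
    calc A * X = A * (X * B * X) := by rw [hB1]
      _ = (A * X) * (B * X) := by simp only [mul_assoc]
      _ = (A * X)ᵀ * (B * X)ᵀ := by rw [hA4, hB4]
      _ = ((B * X) * (A * X))ᵀ := (Matrix.transpose_mul _ _).symm
      _ = (B * (X * A * X))ᵀ := by simp only [mul_assoc]
      _ = (B * X)ᵀ := by rw [hA1]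
      _ = B * X := hB4
  calc A = A * X * A := hA2.symm
    _ = A * (X * B) := by rw [mul_assoc, hXAB]
    _ = (B * X) * B := by rw [← mul_assoc, hAXB]
    _ = B := hB2

theorem pinv_one_sub_exp_sq_loewner_le {p : ℕ} (X Xp : Matrix (Fin p) (Fin p) ℝ)
    (hX : X.PosSemidef) (hXp : IsMoorePenroseInv X Xp) :
    ((1.6862 : ℝ) • (X * ((1 + X)⁻¹) ^ 2)
      - Xp * (1 - NormedSpace.exp (-X)) ^ 2).PosSemidef := by
  classical
  have hH : X.IsHermitian := hX.1
  set U : Matrix (Fin p) (Fin p) ℝ := (Matrix.IsHermitian.eigenvectorUnitary hH : Matrix (Fin p) (Fin p) ℝ) with hUdef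
  set d : Fin p → ℝ := hH.eigenvalues with hddef
  have hU2 : U * star U = 1 := (Matrix.mem_unitaryGroup_iff).mp (Matrix.IsHermitian.eigenvectorUnitary hH).2
  have hU1 : star U * U = 1 := (Matrix.mem_unitaryGroup_iff').mp (Matrix.IsHermitian.eigenvectorUnitary hH).2
  have hd0 : ∀ i, 0 ≤ d i := fun i => hX.eigenvalues_nonneg i
  have hXspec : X = conjM U d := by
    unfold conjM
    rw [Matrix.IsHermitian.spectral_theorem hH]
    simp only [Unitary.conjStarAlgAut_apply, hUdef, hddef, RCLike.ofReal_real_eq_id, Function.id_comp]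
  set dp : Fin p → ℝ := fun i => if d i = 0 then 0 else (d i)⁻¹ with hdpdef
  have hXp_eq : Xp = conjM U dp := by
    refine isMoorePenroseInv_unique X Xp (conjM U dp) hXp ?_
    rw [hXspec]
    exact conjM_isMP hU1 hU2 d
  -- rewrite all matrix expressions as conjugations
  have h1X : 1 + X = conjM U (fun i => 1 + d i) := by
    rw [hXspec, ← conjM_one hU2, conjM_add]
  have h1Xinv : (1 + X)⁻¹ = conjM U (fun i => (1 + d i)⁻¹) := by
    rw [h1X]
    exact conjM_inv hU1 hU2 _ (fun i => by have := hd0 i; positivity)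
  have h1Xinv2 : ((1 + X)⁻¹) ^ 2 = conjM U (fun i => (1 + d i)⁻¹ * (1 + d i)⁻¹) := by
    rw [pow_two, h1Xinv, conjM_mul hU1]
  have hXmul : X * ((1 + X)⁻¹) ^ 2
      = conjM U (fun i => d i * ((1 + d i)⁻¹ * (1 + d i)⁻¹)) := by
    rw [h1Xinv2, hXspec, conjM_mul hU1]
  have hnegX : -X = conjM U (fun i => -d i) := by rw [hXspec, conjM_neg]
  have hexpX : NormedSpace.exp (-X) = conjM U (fun i => Real.exp (-d i)) := by
    rw [hnegX, conjM_exp hU1 hU2]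
  have hsub : 1 - NormedSpace.exp (-X) = conjM U (fun i => 1 - Real.exp (-d i)) := by
    rw [hexpX, ← conjM_one hU2, conjM_sub]
  have hsub2 : (1 - NormedSpace.exp (-X)) ^ 2
      = conjM U (fun i => (1 - Real.exp (-d i)) * (1 - Real.exp (-d i))) := by
    rw [pow_two, hsub, conjM_mul hU1]
  have hXpmul : Xp * (1 - NormedSpace.exp (-X)) ^ 2
      = conjM U (fun i => dp i * ((1 - Real.exp (-d i)) * (1 - Real.exp (-d i)))) := by
    rw [hXp_eq, hsub2, conjM_mul hU1]
  have hsmul : (1.6862 : ℝ) • (X * ((1 + X)⁻¹) ^ 2)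
      = conjM U (fun i => 1.6862 * (d i * ((1 + d i)⁻¹ * (1 + d i)⁻¹))) := by
    rw [hXmul, conjM_smul]
  have htotal : (1.6862 : ℝ) • (X * ((1 + X)⁻¹) ^ 2)
      - Xp * (1 - NormedSpace.exp (-X)) ^ 2
      = conjM U (fun i => 1.6862 * (d i * ((1 + d i)⁻¹ * (1 + d i)⁻¹))
          - dp i * ((1 - Real.exp (-d i)) * (1 - Real.exp (-d i)))) := by
    rw [hsmul, hXpmul, conjM_sub]
  rw [htotal]
  apply conjM_posSemidef
  intro i
  by_cases h : d i = 0
  · simp [hdpdef, h]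
  · have hpos : 0 < d i := lt_of_le_of_ne (hd0 i) (Ne.symm h)
    have := scalar_main (d i) hpos
    simp only [hdpdef, if_neg h]
    rw [sub_nonneg]
    calc (d i)⁻¹ * ((1 - Real.exp (-d i)) * (1 - Real.exp (-d i)))
        ≤ 1.6862 * (d i * ((1 + d i)⁻¹ * (1 + d i)⁻¹)) := this
      _ = _ := rfl
end

section
/- For every s ≥ 0 and α > 0: α e^{-2αs} + (1-e^{-αs})^2/s ≤ 1.2147 · α/(1+αs), with the convention (1-e^{-x})^2/x = 0 at x = 0. -/
set_option maxHeartbeats 1000000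
open Real

noncomputable def G6 (t : ℝ) : ℝ := 1 - t + t^2/2 - t^3/6 + t^4/24 - t^5/120 - (7/4320)*t^6

lemma exp_neg_ge_s17 (t : ℝ) (h : |t| ≤ 1) : G6 t ≤ Real.exp (-t) := by
  have h6 : |(-t)| ≤ 1 := by rwa [abs_neg]
  have hb := Real.exp_bound h6 (n := 6) (by norm_num)
  have hsum : ∑ m ∈ Finset.range 6, (-t) ^ m / m.factorial
      = 1 - t + t^2/2 - t^3/6 + t^4/24 - t^5/120 := by
    simp [Finset.sum_range_succ, Nat.factorial]
    ring
  rw [hsum] at hb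
  have habs : |(-t)|^6 = t^6 := by
    rw [abs_neg, ← abs_pow, abs_of_nonneg (by positivity)]
  rw [habs] at hb
  have h2 := (abs_sub_le_iff.1 hb).2
  have h3 : ((Nat.succ 6 : ℕ) : ℝ) / ((Nat.factorial 6 : ℕ) * (6:ℕ)) = 7/4320 := by
    norm_num [Nat.factorial]
  rw [h3] at h2
  unfold G6
  linarith

lemma G6_nonneg (t : ℝ) (h : |t| ≤ 1) : 0 ≤ G6 t := by
  rw [abs_le] at h
  unfold G6
  nlinarith [sq_nonneg t, sq_nonneg (t^2), sq_nonneg (t^3), sq_nonneg (1-t), sq_nonneg (t*(1-t))]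

lemma step (x c q r0 r1 : ℝ) (hc : |x - c| ≤ 1) (hq : 0 ≤ q) (hqe : q ≤ Real.exp (-c))
    (hpoly : 1 - (r0 + r1*x) ≤ (1+x)*(q*G6 (x-c)))
    (hr : (r0+r1*x)^2 ≤ 0.2147*x) (hx : 0 ≤ x) :
    (1 - (1+x)*Real.exp (-x))^2 ≤ 0.2147*x := by
  have hG : 0 ≤ G6 (x-c) := G6_nonneg _ hc
  have hvw : q * G6 (x-c) ≤ Real.exp (-x) := by
    have h1 : Real.exp (-x) = Real.exp (-c) * Real.exp (-(x-c)) := by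
      rw [← Real.exp_add]; ring_nf
    rw [h1]
    exact mul_le_mul hqe (exp_neg_ge_s17 _ hc) hG (Real.exp_pos _).le
  have hx1 : (0:ℝ) ≤ 1 + x := by linarith
  have hv1 : (1+x)*Real.exp (-x) ≤ 1 := by
    have h2 : 1 + x ≤ Real.exp x := by linarith [Real.add_one_le_exp x]
    have h3 : Real.exp (-x) = (Real.exp x)⁻¹ := Real.exp_neg x
    rw [h3]
    rw [mul_inv_le_iff₀ (Real.exp_pos x)]
    linarith
  have hw : 1 - (r0 + r1*x) ≤ (1+x)*Real.exp (-x) :=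
    le_trans hpoly (mul_le_mul_of_nonneg_left hvw hx1)
  have h0 : 0 ≤ 1 - (1+x)*Real.exp (-x) := by linarith
  have hrpos : 0 ≤ r0 + r1*x := by linarith
  have : (1 - (1+x)*Real.exp (-x))^2 ≤ (r0+r1*x)^2 := by
    apply sq_le_sq' <;> linarith
  linarith

lemma key (x : ℝ) (hx : 0 < x) : (1 - (1+x)*Real.exp (-x))^2 ≤ 0.2147*x := by
  have hexp1 := Real.exp_one_lt_d9
  have hexp1' := Real.exp_one_gt_d9
  have hpos := Real.exp_pos (1:ℝ)
  have hq1 : (367879/1000000 : ℝ) ≤ Real.exp (-1) := by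
    rw [Real.exp_neg, le_inv_comm₀ (by norm_num) hpos]
    calc Real.exp 1 ≤ 2.7182818286 := hexp1.le
    _ ≤ 1000000/367879 := by norm_num
    _ = ((367879:ℝ)/1000000)⁻¹ := by norm_num
  have hq3 : (49787/1000000 : ℝ) ≤ Real.exp (-3) := by
    have h3 : Real.exp (3:ℝ) = (Real.exp 1)^(3:ℕ) := by
      rw [← Real.exp_nat_mul]; norm_num
    rw [Real.exp_neg, le_inv_comm₀ (by norm_num) (Real.exp_pos 3), h3]
    calc (Real.exp 1)^(3:ℕ) ≤ 2.7182818286^(3:ℕ) := pow_le_pow_left₀ (Real.exp_pos 1).le hexp1.le _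
    _ ≤ 1000000/49787 := by norm_num
    _ = ((49787:ℝ)/1000000)⁻¹ := by norm_num
  have hq4 : (18315/1000000 : ℝ) ≤ Real.exp (-4) := by
    have h4 : Real.exp (4:ℝ) = (Real.exp 1)^(4:ℕ) := by
      rw [← Real.exp_nat_mul]; norm_num
    rw [Real.exp_neg, le_inv_comm₀ (by norm_num) (Real.exp_pos 4), h4]
    calc (Real.exp 1)^(4:ℕ) ≤ 2.7182818286^(4:ℕ) := pow_le_pow_left₀ (Real.exp_pos 1).le hexp1.le _
    _ ≤ 1000000/18315 := by norm_num
    _ = ((18315:ℝ)/1000000)⁻¹ := by norm_num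
  have hv0 : 0 ≤ (1+x)*Real.exp (-x) := by positivity
  have hv1 : (1+x)*Real.exp (-x) ≤ 1 := by
    have h2 : 1 + x ≤ Real.exp x := by linarith [Real.add_one_le_exp x]
    rw [Real.exp_neg, mul_inv_le_iff₀ (Real.exp_pos x)]
    linarith
  rcases le_or_gt x 0.59 with hA | hA
  · -- small x
    have he : 1 - x ≤ Real.exp (-x) := by
      have := Real.add_one_le_exp (-x); linarith
    have hv : 1 - x^2 ≤ (1+x)*Real.exp (-x) := by nlinarith [Real.exp_pos (-x)]
    have h0 : 0 ≤ 1 - (1+x)*Real.exp (-x) := by linarith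
    have hsq : (1 - (1+x)*Real.exp (-x))^2 ≤ (x^2)^2 := by
      apply sq_le_sq' <;> nlinarith
    nlinarith [mul_pos hx hx, mul_pos (mul_pos hx hx) hx]
  rcases lt_or_ge x 4.66 with hB | hB
  swap
  · -- large x
    nlinarith [sq_nonneg (1 - (1+x)*Real.exp (-x))]
  -- middle: intervals
  rcases le_or_gt x (2) with h | h
  · refine step x 1 (367879/1000000) (2306411/10000000) (84929/400000) (by rw [abs_le]; constructor <;> [linarith; linarith]) (by norm_num) hq1 ?_ ?_ (by linarith)
    · unfold G6
      nlinarith [mul_nonneg (by linarith : (0:ℝ) ≤ x - (59/100)) (by linarith : (0:ℝ) ≤ (2) - x), sq_nonneg (x - (2)), mul_nonneg (mul_nonneg (by linarith : (0:ℝ) ≤ x - (59/100)) (by linarith : (0:ℝ) ≤ (2) - x)) (sq_nonneg (x - (2))), sq_nonneg ((x - (2))^2), sq_nonneg ((x - (2))*(x - (59/100))), sq_nonneg ((x - (2))*((2) - x))]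
    · nlinarith [mul_nonneg (by linarith : (0:ℝ) ≤ x - (59/100)) (by linarith : (0:ℝ) ≤ (2) - x)]
  rcases le_or_gt x (78/25) with h | h
  · refine step x 3 (49787/1000000) (3639183/10000000) (1456839/10000000) (by rw [abs_le]; constructor <;> [linarith; linarith]) (by norm_num) hq3 ?_ ?_ (by linarith)
    · unfold G6
      nlinarith [mul_nonneg (by linarith : (0:ℝ) ≤ x - (2)) (by linarith : (0:ℝ) ≤ (78/25) - x), sq_nonneg (x - (1519/500)), mul_nonneg (mul_nonneg (by linarith : (0:ℝ) ≤ x - (2)) (by linarith : (0:ℝ) ≤ (78/25) - x)) (sq_nonneg (x - (1519/500))), sq_nonneg ((x - (1519/500))^2), sq_nonneg ((x - (1519/500))*(x - (2))), sq_nonneg ((x - (1519/500))*((78/25) - x))]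
    · nlinarith [mul_nonneg (by linarith : (0:ℝ) ≤ x - (2)) (by linarith : (0:ℝ) ≤ (78/25) - x)]
  rcases le_or_gt x (163/50) with h | h
  · refine step x 3 (49787/1000000) (1034291/2500000) (129723/1000000) (by rw [abs_le]; constructor <;> [linarith; linarith]) (by norm_num) hq3 ?_ ?_ (by linarith)
    · unfold G6
      nlinarith [mul_nonneg (by linarith : (0:ℝ) ≤ x - (78/25)) (by linarith : (0:ℝ) ≤ (163/50) - x), sq_nonneg (x - (401/125)), mul_nonneg (mul_nonneg (by linarith : (0:ℝ) ≤ x - (78/25)) (by linarith : (0:ℝ) ≤ (163/50) - x)) (sq_nonneg (x - (401/125))), sq_nonneg ((x - (401/125))^2), sq_nonneg ((x - (401/125))*(x - (78/25))), sq_nonneg ((x - (401/125))*((163/50) - x))]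
    · nlinarith [mul_nonneg (by linarith : (0:ℝ) ≤ x - (78/25)) (by linarith : (0:ℝ) ≤ (163/50) - x)]
  rcases le_or_gt x (4) with h | h
  · refine step x 3 (49787/1000000) (439681/1000000) (76099/625000) (by rw [abs_le]; constructor <;> [linarith; linarith]) (by norm_num) hq3 ?_ ?_ (by linarith)
    · unfold G6
      nlinarith [mul_nonneg (by linarith : (0:ℝ) ≤ x - (163/50)) (by linarith : (0:ℝ) ≤ (4) - x), sq_nonneg (x - (3299/1000)), mul_nonneg (mul_nonneg (by linarith : (0:ℝ) ≤ x - (163/50)) (by linarith : (0:ℝ) ≤ (4) - x)) (sq_nonneg (x - (3299/1000))), sq_nonneg ((x - (3299/1000))^2), sq_nonneg ((x - (3299/1000))*(x - (163/50))), sq_nonneg ((x - (3299/1000))*((4) - x))]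
    · nlinarith [mul_nonneg (by linarith : (0:ℝ) ≤ x - (163/50)) (by linarith : (0:ℝ) ≤ (4) - x)]
  rcases le_or_gt x (233/50) with h | h
  · refine step x 4 (18315/1000000) (2405199/5000000) (1114187/10000000) (by rw [abs_le]; constructor <;> [linarith; linarith]) (by norm_num) hq4 ?_ ?_ (by linarith)
    · unfold G6
      nlinarith [mul_nonneg (by linarith : (0:ℝ) ≤ x - (4)) (by linarith : (0:ℝ) ≤ (233/50) - x), sq_nonneg (x - (4)), mul_nonneg (mul_nonneg (by linarith : (0:ℝ) ≤ x - (4)) (by linarith : (0:ℝ) ≤ (233/50) - x)) (sq_nonneg (x - (4))), sq_nonneg ((x - (4))^2), sq_nonneg ((x - (4))*(x - (4))), sq_nonneg ((x - (4))*((233/50) - x))]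
    · nlinarith [mul_nonneg (by linarith : (0:ℝ) ≤ x - (4)) (by linarith : (0:ℝ) ≤ (233/50) - x)]
  linarith


theorem gf_opt_summand_bound (s a : ℝ) (hs : 0 ≤ s) (ha : 0 < a) :
    a * Real.exp (-2 * a * s) + (1 - Real.exp (-(a * s))) ^ 2 / s ≤
      1.2147 * (a / (1 + a * s)) := by
  rcases eq_or_lt_of_le hs with rfl | hs'
  · simp [Real.exp_zero]
    linarith
  · set x := a * s with hxdef
    have hx : 0 < x := mul_pos ha hs'
    set u := Real.exp (-x) with hudef
    have hu0 : 0 < u := Real.exp_pos _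
    have hexp2 : Real.exp (-2 * a * s) = u^2 := by
      rw [hudef, hxdef, sq, ← Real.exp_add]; ring_nf
    have hkey := key x hx
    have h1x : (0:ℝ) < 1 + x := by linarith
    rw [hexp2, show (1.2147:ℝ) * (a / (1 + x)) = (1.2147 * a) / (1 + x) by ring,
      le_div_iff₀ h1x]
    have hexpand : (a * u ^ 2 + (1 - u) ^ 2 / s) * (1 + x)
        = ((1 - (1+x)*u)^2 + x) * a / x := by
      rw [hxdef]
      field_simp
      ring
    rw [hexpand]
    rw [div_le_iff₀ hx]
    have h2 : ((1 - (1+x)*u)^2 + x) ≤ 1.2147 * x := by nlinarith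
    calc ((1 - (1+x)*u)^2 + x) * a ≤ (1.2147 * x) * a := by
          apply mul_le_mul_of_nonneg_right h2 ha.le
    _ = 1.2147 * a * x := by ring
end

section
/- Let A be a real symmetric positive semidefinite matrix and z a complex number with positive real part. Then the Laplace transform of t ↦ exp(-tA) equals (A + zI)^{-1}, i.e., ∫_0^∞ e^{-tz} exp(-tA) dt = (A + zI)^{-1} (entrywise integration). -/
open Matrix MeasureTheory

lemma integrableOn_cexp_neg_mul {w : ℂ} (hw : 0 < w.re) :
    IntegrableOn (fun t : ℝ => Complex.exp (-(w * t))) (Set.Ioi (0:ℝ)) := by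
  refine (exp_neg_integrableOn_Ioi 0 hw).mono' ?_ ?_
  · exact (Complex.continuous_exp.comp (by continuity)).aestronglyMeasurable
  · filter_upwards with t
    rw [Complex.norm_exp]
    simp [Complex.mul_re]

lemma integral_cexp_neg_mul {w : ℂ} (hw : 0 < w.re) :
    ∫ t in Set.Ioi (0:ℝ), Complex.exp (-(w * t)) = w⁻¹ := by
  have hw0 : w ≠ 0 := by intro h; rw [h] at hw; simp at hw
  have hderiv : ∀ t ∈ Set.Ici (0:ℝ),
      HasDerivAt (fun t : ℝ => -w⁻¹ * Complex.exp (-(w * t))) (Complex.exp (-(w * t))) t := by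
    intro t _
    have h1 : HasDerivAt (fun u : ℂ => -w⁻¹ * Complex.exp (-(w * u)))
        (-w⁻¹ * (Complex.exp (-(w * (t:ℂ))) * -(w * 1))) ((t:ℝ) : ℂ) :=
      ((((hasDerivAt_id ((t:ℝ):ℂ)).const_mul w).neg).cexp).const_mul _
    have h2 := h1.comp_ofReal
    convert h2 using 1
    field_simp
  have htend : Filter.Tendsto (fun t : ℝ => -w⁻¹ * Complex.exp (-(w * t)))
      Filter.atTop (nhds 0) := by
    rw [tendsto_zero_iff_norm_tendsto_zero]
    have heq : (fun t : ℝ => ‖-w⁻¹ * Complex.exp (-(w * t))‖)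
        = fun t : ℝ => ‖w⁻¹‖ * Real.exp (-(w.re * t)) := by
      funext t
      rw [norm_mul, norm_neg, Complex.norm_exp]
      simp [Complex.mul_re]
    rw [heq, ← mul_zero ‖w⁻¹‖]
    refine Filter.Tendsto.const_mul _ ?_
    refine Real.tendsto_exp_atBot.comp ?_
    exact Filter.tendsto_neg_atTop_atBot.comp
      (Filter.Tendsto.const_mul_atTop hw Filter.tendsto_id)
  have := integral_Ioi_of_hasDerivAt_of_tendsto' hderiv (integrableOn_cexp_neg_mul hw) htend
  rw [this]
  simp

/-- The (entrywise) Laplace transform of `t ↦ exp(-tA)` is `(A + zI)⁻¹`, for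
`A` real symmetric positive semidefinite and `Re(z) > 0`. -/
theorem laplace_transform_matrix_exp {p : ℕ} (A : Matrix (Fin p) (Fin p) ℝ)
    (hA : A.PosSemidef) (z : ℂ) (hz : 0 < z.re) :
    ∀ i j, ∫ t in Set.Ioi (0 : ℝ),
        Complex.exp (-(t : ℂ) * z) * ((NormedSpace.exp ((-t) • A)) i j : ℂ) =
      ((A.map (Complex.ofReal) + z • (1 : Matrix (Fin p) (Fin p) ℂ))⁻¹) i j := by
  intro i j
  classical
  have hH := hA.1
  set U : Matrix (Fin p) (Fin p) ℝ := (hH.eigenvectorUnitary : Matrix (Fin p) (Fin p) ℝ)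
    with hUdef
  set μ : Fin p → ℝ := hH.eigenvalues with hμdef
  have hμ0 : ∀ k, 0 ≤ μ k := hA.eigenvalues_nonneg
  have hUU : U * star U = 1 := (Matrix.mem_unitaryGroup_iff).mp hH.eigenvectorUnitary.2
  have hUU' : star U * U = 1 := (Matrix.mem_unitaryGroup_iff').mp hH.eigenvectorUnitary.2
  have hUnit : IsUnit U := ⟨⟨U, star U, hUU, hUU'⟩, rfl⟩
  have hUinv : U⁻¹ = star U := Matrix.inv_eq_right_inv hUU
  have hspec : A = U * Matrix.diagonal μ * star U := by
    simpa using hH.spectral_theorem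
  have hre : ∀ k, 0 < ((μ k : ℂ) + z).re := by
    intro k
    simp only [Complex.add_re, Complex.ofReal_re]
    exact add_pos_of_nonneg_of_pos (hμ0 k) hz
  -- Step A: exponential of the conjugated matrix
  have hexp : ∀ t : ℝ, NormedSpace.exp ((-t) • A)
      = U * Matrix.diagonal (fun k => Real.exp (-t * μ k)) * star U := by
    intro t
    have h1 : (-t) • A = U * Matrix.diagonal (fun k => -t * μ k) * star U := by
      have hd : (-t) • Matrix.diagonal μ = Matrix.diagonal (fun k => -t * μ k) := by
        rw [← Matrix.diagonal_smul]; rfl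
      rw [hspec, ← smul_mul_assoc, ← mul_smul_comm, hd]
    rw [h1, ← hUinv, Matrix.exp_conj U _ hUnit, Matrix.exp_diagonal, Pi.exp_def]
    congr 1
    congr 1
    funext k
    exact (Real.exp_eq_exp_ℝ ▸ rfl)
  -- Step B: the integrand as a finite sum
  have hentry : ∀ t : ℝ,
      Complex.exp (-(t : ℂ) * z) * ((NormedSpace.exp ((-t) • A)) i j : ℂ)
        = ∑ k, ((U i k * U j k : ℝ) : ℂ) * Complex.exp (-(((μ k : ℂ) + z) * t)) := by
    intro t
    rw [hexp t]
    have he : (U * Matrix.diagonal (fun k => Real.exp (-t * μ k)) * star U) i j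
        = ∑ k, U i k * Real.exp (-t * μ k) * U j k := by
      simp [Matrix.mul_apply, Matrix.diagonal_apply, Matrix.star_apply, star_trivial,
        Finset.sum_mul, mul_ite, ite_mul, mul_zero, zero_mul]
    rw [he]
    push_cast
    rw [Finset.mul_sum]
    refine Finset.sum_congr rfl fun k _ => ?_
    have h2 : -(((μ k : ℂ) + z) * (t : ℂ))
        = -(t : ℂ) * z + (((-t) * μ k : ℝ) : ℂ) := by push_cast; ring
    rw [h2, Complex.exp_add, ← Complex.ofReal_exp]
    push_cast
    ring
  -- Step C: compute the integral
  have hLHS : ∫ t in Set.Ioi (0 : ℝ),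
      Complex.exp (-(t : ℂ) * z) * ((NormedSpace.exp ((-t) • A)) i j : ℂ)
        = ∑ k, ((U i k * U j k : ℝ) : ℂ) * ((μ k : ℂ) + z)⁻¹ := by
    simp only [hentry]
    rw [MeasureTheory.integral_finset_sum _
      (fun k _ => (integrableOn_cexp_neg_mul (hre k)).const_mul _)]
    refine Finset.sum_congr rfl fun k _ => ?_
    rw [MeasureTheory.integral_const_mul, integral_cexp_neg_mul (hre k)]
  rw [hLHS]
  -- Step D: the inverse matrix
  set V := U.map Complex.ofReal with hV
  set W := (star U).map Complex.ofReal with hW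
  have hmap : ∀ M N : Matrix (Fin p) (Fin p) ℝ,
      (M * N).map Complex.ofReal = M.map Complex.ofReal * N.map Complex.ofReal := by
    intro M N
    exact Matrix.map_mul (f := Complex.ofRealHom)
  have hone : (1 : Matrix (Fin p) (Fin p) ℝ).map Complex.ofReal = 1 := by
    ext a b
    by_cases h : a = b <;> simp [Matrix.one_apply, h]
  have hVW : V * W = 1 := by rw [hV, hW, ← hmap, hUU, hone]
  have hWV : W * V = 1 := by rw [hV, hW, ← hmap, hUU', hone]
  have hdmap : (Matrix.diagonal μ).map Complex.ofReal
      = Matrix.diagonal (fun k => (μ k : ℂ)) := by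
    rw [Matrix.diagonal_map (by simp)]
  have hne : ∀ k, (μ k : ℂ) + z ≠ 0 := by
    intro k h
    have := hre k
    rw [h] at this
    simp at this
  have hB : A.map Complex.ofReal + z • (1 : Matrix (Fin p) (Fin p) ℂ)
      = V * Matrix.diagonal (fun k => (μ k : ℂ) + z) * W := by
    rw [hspec, hmap, hmap, hdmap]
    have hz1 : (z • (1 : Matrix (Fin p) (Fin p) ℂ))
        = V * (z • (1 : Matrix (Fin p) (Fin p) ℂ)) * W := by
      rw [mul_smul_comm, smul_mul_assoc, mul_one, hVW]
    rw [hz1, ← Matrix.add_mul, ← Matrix.mul_add, Matrix.smul_one_eq_diagonal,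
      Matrix.diagonal_add]
  have hBinv : (A.map Complex.ofReal + z • (1 : Matrix (Fin p) (Fin p) ℂ))⁻¹
      = V * Matrix.diagonal (fun k => ((μ k : ℂ) + z)⁻¹) * W := by
    rw [hB]
    apply Matrix.inv_eq_right_inv
    have e1 : V * Matrix.diagonal (fun k => (μ k : ℂ) + z) * W
          * (V * Matrix.diagonal (fun k => ((μ k : ℂ) + z)⁻¹) * W)
        = V * Matrix.diagonal (fun k => (μ k : ℂ) + z)
          * ((W * V) * (Matrix.diagonal (fun k => ((μ k : ℂ) + z)⁻¹) * W)) := by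
      simp only [Matrix.mul_assoc]
    rw [e1, hWV, one_mul, ← Matrix.mul_assoc, Matrix.mul_assoc V,
      Matrix.diagonal_mul_diagonal]
    have : (fun k => ((μ k : ℂ) + z) * ((μ k : ℂ) + z)⁻¹) = fun _ => (1:ℂ) := by
      funext k; exact mul_inv_cancel₀ (hne k)
    rw [this, Matrix.diagonal_one, Matrix.mul_one, hVW]
  rw [hBinv]
  have hRHS : (V * Matrix.diagonal (fun k => ((μ k : ℂ) + z)⁻¹) * W) i j
      = ∑ k, ((U i k : ℂ)) * ((μ k : ℂ) + z)⁻¹ * (U j k : ℂ) := by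
    simp [hV, hW, Matrix.mul_apply, Matrix.diagonal_apply, Matrix.map_apply,
      Matrix.star_apply, star_trivial, Finset.sum_mul, mul_ite, ite_mul, mul_zero, zero_mul]
  rw [hRHS]
  refine Finset.sum_congr rfl fun k _ => ?_
  push_cast
  ring
end
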